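/- arXiv:math/0702142 — 7 statements merged into one kernel-verified Lean document; each statement's English description precedes it below -/
import Mathlib

section
/- Let R be an integral domain with quotient field K, let X be an indeterminate over R, and let * be a semistar operation on the polynomial ring R[X] (whose quotient field is K(X)). Then the map \bar{*} sending each nonzero R-submodule E of K to E^{\bar{*}} = (E[X])^* ∩ K, where E[X] denotes the R[X]-submodule of K(X) generated by E, is a semistar operation on R. -/
open Polynomial Pointwise

/-- A *semistar operation* on a domain `S` with quotient field `M`: a map on the
(nonzero) `S`-submodules of `M` satisfying `(aE)^* = aE^*`, `E ⊆ E^*`,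
monotonicity and idempotency. -/
structure IsSemistarOperation (S M : Type*) [CommRing S] [Field M] [Algebra S M]
    (star : Submodule S M → Submodule S M) : Prop where
  smul_eq : ∀ a : M, a ≠ 0 → ∀ E : Submodule S M, E ≠ ⊥ → star (a • E) = a • star E
  le_star : ∀ E : Submodule S M, E ≠ ⊥ → E ≤ star E
  mono : ∀ E F : Submodule S M, E ≠ ⊥ → F ≠ ⊥ → E ≤ F → star E ≤ star F
  idem : ∀ E : Submodule S M, E ≠ ⊥ → star (star E) = star E

variable {R K L : Type*} [CommRing R] [IsDomain R]
  [Field K] [Algebra R K] [IsFractionRing R K]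
  [Field L] [Algebra R[X] L] [IsFractionRing R[X] L]

/-- `E[X]`: the `R[X]`-submodule of `L = K(X)` generated by `E ⊆ K`,
where `ι : K →+* L` is the canonical embedding. -/
noncomputable def polyExt (ι : K →+* L) (E : Submodule R K) : Submodule R[X] L :=
  Submodule.span R[X] (ι '' (E : Set K))

/-- The operation `E ↦ E^{\bar{*}} = (E[X])^* ∩ K` on `R`-submodules of `K` induced by a
semistar operation `*` on `R[X]`. -/
def barStar (star : Submodule R[X] L → Submodule R[X] L) (ι : K →+* L)
    (hι : ∀ r : R, ι (algebraMap R K r) = algebraMap R[X] L (C r))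
    (E : Submodule R K) : Submodule R K where
  carrier := ι ⁻¹' (star (polyExt ι E) : Set L)
  add_mem' := fun {a b} ha hb => by
    simp only [Set.mem_preimage, SetLike.mem_coe, map_add] at *
    exact (star (polyExt ι _)).add_mem ha hb
  zero_mem' := by
    simp only [Set.mem_preimage, SetLike.mem_coe, map_zero]
    exact (star (polyExt ι _)).zero_mem
  smul_mem' := fun r x hx => by
    simp only [Set.mem_preimage, SetLike.mem_coe] at *
    have h : ι (r • x) = (C r : R[X]) • ι x := by
      rw [Algebra.smul_def, map_mul, hι, Algebra.smul_def]
    rw [h]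
    exact (star (polyExt ι _)).smul_mem _ hx

/-!
The map `E ↦ E[X]` preserves nonzero submodules, inclusions and multiplication by nonzero
constants, and `E ↦ N ∩ K` is right adjoint to it: `E[X] ⊆ N ↔ E ⊆ N ∩ K`. The first three
semistar axioms for `\bar{*}` are transported from those of `*` along these facts. Idempotency
follows from `E[X] ⊆ (E^{\bar{*}})[X] ⊆ (E[X])^*`, which forces `((E^{\bar{*}})[X])^* = (E[X])^*`.
-/

namespace IsSemistarOperation

variable {S M : Type*} [CommRing S] [Field M] [Algebra S M]
  {star : Submodule S M → Submodule S M}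

theorem ne_bot (hstar : IsSemistarOperation S M star) {E : Submodule S M} (hE : E ≠ ⊥) :
    star E ≠ ⊥ :=
  ne_bot_of_le_ne_bot hE (hstar.le_star E hE)

theorem eq_of_le_of_le_star (hstar : IsSemistarOperation S M star) {E F : Submodule S M}
    (hE : E ≠ ⊥) (hEF : E ≤ F) (hF : F ≤ star E) : star F = star E :=
  le_antisymm
    ((hstar.mono F _ (ne_bot_of_le_ne_bot hE hEF) (hstar.ne_bot hE) hF).trans
      (hstar.idem E hE).le)
    (hstar.mono E F hE (ne_bot_of_le_ne_bot hE hEF) hEF)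

end IsSemistarOperation

theorem Submodule.mem_pointwise_smul_iff_inv_smul_mem₀ {α S M : Type*} [GroupWithZero α]
    [Semiring S] [AddCommMonoid M] [Module S M] [DistribMulAction α M] [SMulCommClass α S M]
    {a : α} (ha : a ≠ 0) (N : Submodule S M) (x : M) : x ∈ a • N ↔ a⁻¹ • x ∈ N := by
  rw [← SetLike.mem_coe, Submodule.coe_pointwise_smul, Set.mem_smul_set_iff_inv_smul_mem₀ ha,
    SetLike.mem_coe]

section PolyExt

variable {R K L : Type*} [CommRing R] [Field K] [Algebra R K] [Field L] [Algebra R[X] L]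
  (ι : K →+* L)

theorem mem_polyExt_of_mem {E : Submodule R K} {x : K} (hx : x ∈ E) : ι x ∈ polyExt ι E :=
  Submodule.subset_span ⟨x, hx, rfl⟩

theorem polyExt_le_iff {E : Submodule R K} {N : Submodule R[X] L} :
    polyExt ι E ≤ N ↔ (E : Set K) ⊆ ι ⁻¹' N :=
  Submodule.span_le.trans Set.image_subset_iff

theorem polyExt_ne_bot {E : Submodule R K} (hE : E ≠ ⊥) : polyExt ι E ≠ ⊥ := by
  obtain ⟨x, hxE, hx⟩ := Submodule.exists_mem_ne_zero_of_ne_bot hE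
  exact (Submodule.ne_bot_iff _).2 ⟨ι x, mem_polyExt_of_mem ι hxE, (map_ne_zero ι).2 hx⟩

theorem polyExt_mono {E F : Submodule R K} (h : E ≤ F) : polyExt ι E ≤ polyExt ι F :=
  Submodule.span_mono (Set.image_mono h)

theorem polyExt_smul (a : K) (E : Submodule R K) : polyExt ι (a • E) = ι a • polyExt ι E := by
  rw [polyExt, polyExt, Submodule.coe_pointwise_smul, Set.image_smul_distrib, Submodule.span_smul]

end PolyExt

section BarStar

variable {R K L : Type*} [CommRing R] [Field K] [Algebra R K] [Field L] [Algebra R[X] L]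
  {star : Submodule R[X] L → Submodule R[X] L} (ι : K →+* L)
  (hι : ∀ r : R, ι (algebraMap R K r) = algebraMap R[X] L (C r))

theorem mem_barStar {E : Submodule R K} {x : K} :
    x ∈ barStar star ι hι E ↔ ι x ∈ star (polyExt ι E) :=
  Iff.rfl

theorem polyExt_barStar_le (E : Submodule R K) :
    polyExt ι (barStar star ι hι E) ≤ star (polyExt ι E) :=
  (polyExt_le_iff ι).2 fun _ hx => hx

variable {ι}

theorem le_barStar (hstar : IsSemistarOperation R[X] L star) {E : Submodule R K} (hE : E ≠ ⊥) :
    E ≤ barStar star ι hι E :=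
  fun _ hx => hstar.le_star _ (polyExt_ne_bot ι hE) (mem_polyExt_of_mem ι hx)

theorem barStar_mono (hstar : IsSemistarOperation R[X] L star) {E F : Submodule R K}
    (hE : E ≠ ⊥) (hF : F ≠ ⊥) (h : E ≤ F) : barStar star ι hι E ≤ barStar star ι hι F :=
  fun _ hx => hstar.mono _ _ (polyExt_ne_bot ι hE) (polyExt_ne_bot ι hF) (polyExt_mono ι h) hx

theorem barStar_smul (hstar : IsSemistarOperation R[X] L star) {a : K} (ha : a ≠ 0)
    {E : Submodule R K} (hE : E ≠ ⊥) : barStar star ι hι (a • E) = a • barStar star ι hι E := by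
  have hιa : ι a ≠ 0 := (map_ne_zero ι).2 ha
  ext x
  rw [mem_barStar, polyExt_smul, hstar.smul_eq _ hιa _ (polyExt_ne_bot ι hE),
    Submodule.mem_pointwise_smul_iff_inv_smul_mem₀ hιa,
    Submodule.mem_pointwise_smul_iff_inv_smul_mem₀ ha, mem_barStar, smul_eq_mul, smul_eq_mul,
    map_mul, map_inv₀]

theorem star_polyExt_barStar (hstar : IsSemistarOperation R[X] L star) {E : Submodule R K}
    (hE : E ≠ ⊥) : star (polyExt ι (barStar star ι hι E)) = star (polyExt ι E) :=
  hstar.eq_of_le_of_le_star (polyExt_ne_bot ι hE) (polyExt_mono ι (le_barStar hι hstar hE))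
    (polyExt_barStar_le ι hι E)

theorem barStar_idem (hstar : IsSemistarOperation R[X] L star) {E : Submodule R K}
    (hE : E ≠ ⊥) : barStar star ι hι (barStar star ι hι E) = barStar star ι hι E := by
  ext x
  rw [mem_barStar, star_polyExt_barStar hι hstar hE, mem_barStar]

end BarStar

theorem barStar_isSemistarOperation
    (star : Submodule R[X] L → Submodule R[X] L)
    (hstar : IsSemistarOperation R[X] L star)
    (ι : K →+* L)
    (hι : ∀ r : R, ι (algebraMap R K r) = algebraMap R[X] L (C r)) :
    IsSemistarOperation R K (barStar star ι hι) :=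
  { smul_eq := fun _ ha _ hE => barStar_smul hι hstar ha hE
    le_star := fun _ hE => le_barStar hι hstar hE
    mono := fun _ _ hE hF h => barStar_mono hι hstar hE hF h
    idem := fun _ hE => barStar_idem hι hstar hE }
end

section
/- Let R be an integral domain, X an indeterminate over R, * a star operation of finite character on R[X], and Q a *-maximal ideal of R[X] with q = Q ∩ R ≠ (0). Then the following statements are equivalent: (i) Q = q[X]; (ii) c(Q)^{\bar{*}} ⊊ R; (iii) c(g)^{\bar{*}} ⊊ R for each nonzero g ∈ Q. -/
open Polynomial

/-- A *star operation* on a domain `S` with quotient field `M`: a map on the nonzero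
fractional ideals of `S` satisfying `(aI)^* = aI^*`, `I ⊆ I^*`, monotonicity,
idempotency and `S^* = S`. -/
structure IsStarOperation (S M : Type*) [CommRing S] [IsDomain S] [Field M] [Algebra S M]
    [IsFractionRing S M]
    (star : FractionalIdeal (nonZeroDivisors S) M → FractionalIdeal (nonZeroDivisors S) M) :
    Prop where
  smul_eq : ∀ a : M, a ≠ 0 → ∀ I, I ≠ 0 →
    star (FractionalIdeal.spanSingleton (nonZeroDivisors S) a * I) =
      FractionalIdeal.spanSingleton (nonZeroDivisors S) a * star I
  le_star : ∀ I, I ≠ 0 → I ≤ star I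
  mono : ∀ I J, I ≠ 0 → J ≠ 0 → I ≤ J → star I ≤ star J
  idem : ∀ I, I ≠ 0 → star (star I) = star I
  star_one : star 1 = 1

/-- A star operation has *finite character* if
`I^* = ⋃ {J^* : J nonzero finitely generated fractional ideal, J ⊆ I}`. -/
def StarFiniteCharacter (S M : Type*) [CommRing S] [IsDomain S] [Field M] [Algebra S M]
    [IsFractionRing S M]
    (star : FractionalIdeal (nonZeroDivisors S) M → FractionalIdeal (nonZeroDivisors S) M) :
    Prop :=
  ∀ I, I ≠ 0 → ∀ x : M,
    x ∈ star I ↔ ∃ J : FractionalIdeal (nonZeroDivisors S) M, J ≠ 0 ∧ (J : Submodule S M).FG ∧ J ≤ I ∧ x ∈ star J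

/-- `Q` is a `*`-maximal ideal: a proper nonzero integral `*`-ideal which is maximal
among proper integral `*`-ideals. -/
def IsStarMaximal {S M : Type*} [CommRing S] [IsDomain S] [Field M] [Algebra S M]
    [IsFractionRing S M]
    (star : FractionalIdeal (nonZeroDivisors S) M → FractionalIdeal (nonZeroDivisors S) M)
    (Q : Ideal S) : Prop :=
  Q ≠ ⊥ ∧ Q ≠ ⊤ ∧ star ↑Q = (Q : FractionalIdeal (nonZeroDivisors S) M) ∧
    ∀ J : Ideal S, J ≠ ⊥ → J ≠ ⊤ → star ↑J = (J : FractionalIdeal (nonZeroDivisors S) M) →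
      Q ≤ J → Q = J

/-- An *upper to zero* in `R[X]`: a nonzero prime ideal `Q` with `Q ∩ R = (0)`. -/
def IsUpperToZero {R : Type*} [CommRing R] [IsDomain R] (Q : Ideal R[X]) : Prop :=
  Q.IsPrime ∧ Q ≠ ⊥ ∧ Q.comap (C : R →+* R[X]) = ⊥

/-- `c(Q)`: the content of an ideal `Q` of `R[X]`, the ideal of `R` generated by the
coefficients of all elements of `Q`. -/
def contentIdeal {R : Type*} [CommRing R] (Q : Ideal R[X]) : Ideal R :=
  Ideal.span {a : R | ∃ f ∈ Q, ∃ n, f.coeff n = a}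

/-- `c(f)`: the content of a polynomial, the ideal generated by its coefficients. -/
def coeffIdeal {R : Type*} [CommRing R] (f : R[X]) : Ideal R :=
  Ideal.span {a : R | ∃ n, f.coeff n = a}

set_option linter.unusedSectionVars false

section Aux

variable {R : Type*} [CommRing R]

lemma coeff_mem_coeffIdeal (g : R[X]) (n : ℕ) : g.coeff n ∈ coeffIdeal g :=
  Ideal.subset_span ⟨n, rfl⟩

lemma coeffIdeal_ne_bot {g : R[X]} (hg : g ≠ 0) : coeffIdeal g ≠ ⊥ := by
  intro h
  have h1 := coeff_mem_coeffIdeal g g.natDegree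
  rw [h, Ideal.mem_bot] at h1
  exact hg (Polynomial.leadingCoeff_eq_zero.mp h1)

lemma comb (Q : Ideal R[X]) {g₁ g₂ : R[X]} (h₁ : g₁ ∈ Q) (h₂ : g₂ ∈ Q) :
    ∃ h ∈ Q, coeffIdeal g₁ ≤ coeffIdeal h ∧ coeffIdeal g₂ ≤ coeffIdeal h := by
  set N := g₁.natDegree + 1 with hN
  refine ⟨g₁ + g₂ * X ^ N, Q.add_mem h₁ (Q.mul_mem_right _ h₂), ?_, ?_⟩
  · rw [coeffIdeal, Ideal.span_le]
    rintro a ⟨n, rfl⟩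
    by_cases hn : n ≤ g₁.natDegree
    · have : g₁.coeff n = (g₁ + g₂ * X ^ N).coeff n := by
        rw [Polynomial.coeff_add, Polynomial.coeff_mul_X_pow', if_neg (by omega), add_zero]
      rw [this]; exact coeff_mem_coeffIdeal _ _
    · rw [Polynomial.coeff_eq_zero_of_natDegree_lt (by omega)]
      exact Ideal.zero_mem _
  · rw [coeffIdeal, Ideal.span_le]
    rintro a ⟨n, rfl⟩
    have : g₂.coeff n = (g₁ + g₂ * X ^ N).coeff (n + N) := by
      have hg1 : g₁.coeff (n + N) = 0 :=
        Polynomial.coeff_eq_zero_of_natDegree_lt (by omega)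
      rw [Polynomial.coeff_add, Polynomial.coeff_mul_X_pow', if_pos (by omega), hg1, zero_add,
        Nat.add_sub_cancel]
    rw [this]; exact coeff_mem_coeffIdeal _ _

lemma finset_content (Q : Ideal R[X]) (T : Finset R)
    (hT : ∀ a ∈ T, ∃ f ∈ Q, ∃ n, f.coeff n = a) :
    ∃ h ∈ Q, ∀ a ∈ T, a ∈ coeffIdeal h := by
  classical
  induction T using Finset.induction with
  | empty => exact ⟨0, Q.zero_mem, by simp⟩
  | @insert a T ha ih =>
    obtain ⟨h, hQ, hmem⟩ := ih fun b hb => hT b (Finset.mem_insert_of_mem hb)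
    obtain ⟨f, hfQ, n, hfn⟩ := hT a (Finset.mem_insert_self _ _)
    obtain ⟨h', hQ', hle1, hle2⟩ := comb Q hQ hfQ
    refine ⟨h', hQ', fun b hb => ?_⟩
    rcases Finset.mem_insert.mp hb with rfl | hb
    · exact hle2 (Ideal.subset_span ⟨n, hfn⟩)
    · exact hle1 (hmem b hb)

lemma mem_content_exists (Q : Ideal R[X]) {x : R} (hx : x ∈ contentIdeal Q) :
    ∃ h ∈ Q, x ∈ coeffIdeal h := by
  obtain ⟨T, hTsub, hxT⟩ := Submodule.mem_span_finite_of_mem_span hx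
  obtain ⟨h, hQm, hmem⟩ := finset_content Q T fun a ha => hTsub ha
  exact ⟨h, hQm, Submodule.span_le.mpr (fun a ha => hmem a ha) hxT⟩

lemma finset_content' (Q : Ideal R[X]) (T : Finset R)
    (hT : ∀ a ∈ T, a ∈ contentIdeal Q) :
    ∃ h ∈ Q, ∀ a ∈ T, a ∈ coeffIdeal h := by
  classical
  induction T using Finset.induction with
  | empty => exact ⟨0, Q.zero_mem, by simp⟩
  | @insert a T ha ih =>
    obtain ⟨h, hQ, hmem⟩ := ih fun b hb => hT b (Finset.mem_insert_of_mem hb)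
    obtain ⟨h₂, hQ₂, ha₂⟩ := mem_content_exists Q (hT a (Finset.mem_insert_self _ _))
    obtain ⟨h', hQ', hle1, hle2⟩ := comb Q hQ hQ₂
    refine ⟨h', hQ', fun b hb => ?_⟩
    rcases Finset.mem_insert.mp hb with rfl | hb
    · exact hle2 ha₂
    · exact hle1 (hmem b hb)

lemma poly_content (Q : Ideal R[X]) {f : R[X]}
    (hf : f ∈ (contentIdeal Q).map (C : R →+* R[X])) :
    ∃ h ∈ Q, f ∈ (coeffIdeal h).map (C : R →+* R[X]) := by
  classical
  obtain ⟨h, hQ, hmem⟩ := finset_content' Q (f.support.image f.coeff) fun a ha => by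
    obtain ⟨n, _, rfl⟩ := Finset.mem_image.mp ha
    exact Ideal.mem_map_C_iff.mp hf n
  refine ⟨h, hQ, Ideal.mem_map_C_iff.mpr fun n => ?_⟩
  by_cases hn : n ∈ f.support
  · exact hmem _ (Finset.mem_image_of_mem _ hn)
  · rw [Polynomial.notMem_support_iff.mp hn]; exact Ideal.zero_mem _

lemma content_mem (Q : Ideal R[X]) {f : R[X]} (hf : f ∈ Q) (n : ℕ) :
    f.coeff n ∈ contentIdeal Q :=
  Ideal.subset_span ⟨f, hf, n, rfl⟩

end Aux

variable {R K L : Type*} [CommRing R] [IsDomain R]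
  [Field K] [Algebra R K] [IsFractionRing R K]
  [Field L] [Algebra R[X] L] [IsFractionRing R[X] L]

/-- `I^{\bar{*}} = (I[X])^* ∩ K` for an integral ideal `I` of `R`, as a subset of `K`;
here `ι : K →+* L = K(X)` is the canonical embedding. -/
def barStarSet
    (star : FractionalIdeal (nonZeroDivisors R[X]) L → FractionalIdeal (nonZeroDivisors R[X]) L)
    (ι : K →+* L) (I : Ideal R) : Set K :=
  {x : K | ι x ∈ star ((I.map (C : R →+* R[X]) : Ideal R[X]) :
      FractionalIdeal (nonZeroDivisors R[X]) L)}

lemma mapC_coe_ne_zero {I : Ideal R} (hI : I ≠ ⊥) :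
    ((I.map (C : R →+* R[X]) : Ideal R[X]) : FractionalIdeal (nonZeroDivisors R[X]) L) ≠ 0 := by
  rw [FractionalIdeal.coeIdeal_ne_zero]
  exact fun h => hI ((Ideal.map_eq_bot_iff_of_injective Polynomial.C_injective).mp h)

lemma contentIdeal_ne_bot {Q : Ideal R[X]} (hQ : Q ≠ ⊥) : contentIdeal Q ≠ ⊥ := by
  obtain ⟨g, hg, hg0⟩ := Submodule.exists_mem_ne_zero_of_ne_bot hQ
  intro h
  have h1 := content_mem Q hg g.natDegree
  rw [h, Ideal.mem_bot] at h1
  exact hg0 (Polynomial.leadingCoeff_eq_zero.mp h1)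

lemma coeffIdeal_zero_eq : coeffIdeal (0 : R[X]) = ⊥ := by
  rw [eq_bot_iff, coeffIdeal, Ideal.span_le]
  rintro a ⟨n, rfl⟩
  simp

/-- Combine finitely many elements of `↑(c(Q)[X])` into a single `c(h)[X]`. -/
lemma finset_polys
    (Q : Ideal R[X]) (hQbot : Q ≠ ⊥) (s : Finset L)
    (hs : ∀ y ∈ s, y ∈ (((contentIdeal Q).map (C : R →+* R[X]) : Ideal R[X]) :
        FractionalIdeal (nonZeroDivisors R[X]) L)) :
    ∃ h ∈ Q, h ≠ 0 ∧ ∀ y ∈ s, y ∈ (((coeffIdeal h).map (C : R →+* R[X]) : Ideal R[X]) :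
        FractionalIdeal (nonZeroDivisors R[X]) L) := by
  classical
  induction s using Finset.induction with
  | empty =>
    obtain ⟨g, hg, hg0⟩ := Submodule.exists_mem_ne_zero_of_ne_bot hQbot
    exact ⟨g, hg, hg0, by simp⟩
  | @insert y s hy ih =>
    obtain ⟨h, hQm, h0, hmem⟩ := ih fun z hz => hs z (Finset.mem_insert_of_mem hz)
    obtain ⟨f, hf, rfl⟩ := (FractionalIdeal.mem_coeIdeal _).mp
      (hs y (Finset.mem_insert_self _ _))
    obtain ⟨h₂, hQ₂, hf₂⟩ := poly_content Q hf
    obtain ⟨h', hQ', hle1, hle2⟩ := comb Q hQm hQ₂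
    have h'0 : h' ≠ 0 := by
      rintro rfl
      rw [coeffIdeal_zero_eq, le_bot_iff] at hle1
      exact coeffIdeal_ne_bot h0 hle1
    refine ⟨h', hQ', h'0, fun z hz => ?_⟩
    rcases Finset.mem_insert.mp hz with rfl | hz
    · exact (FractionalIdeal.coeIdeal_le_coeIdeal (R := R[X]) L).mpr (Ideal.map_mono hle2)
        (FractionalIdeal.mem_coeIdeal_of_mem (nonZeroDivisors R[X]) hf₂)
    · exact (FractionalIdeal.coeIdeal_le_coeIdeal (R := R[X]) L).mpr (Ideal.map_mono hle1) (hmem z hz)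

/-- Finite-character reduction: membership in `(c(Q)[X])^*` reduces to some `(c(h)[X])^*`. -/
lemma fc_reduction
    (star : FractionalIdeal (nonZeroDivisors R[X]) L → FractionalIdeal (nonZeroDivisors R[X]) L)
    (hstar : IsStarOperation R[X] L star) (hfc : StarFiniteCharacter R[X] L star)
    (Q : Ideal R[X]) (hQbot : Q ≠ ⊥) {x : L}
    (hx : x ∈ star (((contentIdeal Q).map (C : R →+* R[X]) : Ideal R[X]) :
        FractionalIdeal (nonZeroDivisors R[X]) L)) :
    ∃ h ∈ Q, h ≠ 0 ∧ x ∈ star (((coeffIdeal h).map (C : R →+* R[X]) : Ideal R[X]) :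
        FractionalIdeal (nonZeroDivisors R[X]) L) := by
  obtain ⟨J, hJ0, hJfg, hJle, hxJ⟩ :=
    (hfc _ (mapC_coe_ne_zero (contentIdeal_ne_bot hQbot)) x).mp hx
  obtain ⟨s, hsJ⟩ := hJfg
  obtain ⟨h, hQm, h0, hmem⟩ := finset_polys Q hQbot s fun y hy =>
    hJle (hsJ ▸ Submodule.subset_span hy : y ∈ (J : Submodule R[X] L))
  refine ⟨h, hQm, h0, ?_⟩
  have hJle' : J ≤ (((coeffIdeal h).map (C : R →+* R[X]) : Ideal R[X]) :
      FractionalIdeal (nonZeroDivisors R[X]) L) := by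
    rw [← FractionalIdeal.coe_le_coe, ← hsJ]
    exact Submodule.span_le.mpr fun y hy => by
      rw [SetLike.mem_coe, FractionalIdeal.mem_coe]; exact hmem y hy
  exact hstar.mono _ _ hJ0 (mapC_coe_ne_zero (coeffIdeal_ne_bot h0)) hJle' hxJ

lemma range_subset_of_one_mem
    (star : FractionalIdeal (nonZeroDivisors R[X]) L → FractionalIdeal (nonZeroDivisors R[X]) L)
    (ι : K →+* L) (hι : ∀ r : R, ι (algebraMap R K r) = algebraMap R[X] L (C r))
    (I : Ideal R) (h1 : (1 : K) ∈ barStarSet star ι I) :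
    Set.range (algebraMap R K) ⊆ barStarSet star ι I := by
  rintro _ ⟨r, rfl⟩
  have h1' : ι 1 ∈ (star ((I.map (C : R →+* R[X]) : Ideal R[X]) :
      FractionalIdeal (nonZeroDivisors R[X]) L) : Submodule R[X] L) := h1
  have h2 := Submodule.smul_mem _ (C r) h1'
  have : ι (algebraMap R K r) = (C r) • (ι 1) := by
    rw [map_one, Algebra.smul_def, mul_one, hι r]
  simpa only [barStarSet, Set.mem_setOf_eq, this, ← FractionalIdeal.mem_coe] using h2

/-- If `ι x` is the image of a polynomial `f ∈ Q`, then `x` comes from `Q ∩ R`. -/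
lemma mem_comap_of_eq
    (ι : K →+* L) (hι : ∀ r : R, ι (algebraMap R K r) = algebraMap R[X] L (C r))
    (Q : Ideal R[X]) {x : K} {f : R[X]} (hf : f ∈ Q) (hfx : algebraMap R[X] L f = ι x) :
    ∃ r ∈ Q.comap (C : R →+* R[X]), algebraMap R K r = x := by
  obtain ⟨a, b, hb, hab⟩ := IsFractionRing.div_surjective (A := R) x
  have hb0 : b ≠ 0 := nonZeroDivisors.ne_zero hb
  have halgb : algebraMap R K b ≠ 0 :=
    IsFractionRing.to_map_ne_zero_of_mem_nonZeroDivisors hb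
  have hx : x * algebraMap R K b = algebraMap R K a := by
    rw [← hab, div_mul_cancel₀ _ halgb]
  have key : f * C b = C a := by
    apply IsFractionRing.injective R[X] L
    rw [map_mul, ← hι, ← hι, ← hx, map_mul, hfx]
  have hCb : (C b : R[X]) ≠ 0 := fun h => hb0 (Polynomial.C_injective (by simpa using h))
  by_cases ha : a = 0
  · have hf0 : f = 0 := by
      have : f * C b = 0 := by rw [key, ha, map_zero]
      rcases mul_eq_zero.mp this with h | h
      · exact h
      · exact absurd h hCb
    refine ⟨0, by simpa using Q.zero_mem, ?_⟩
    rw [map_zero, ← hab, ha, map_zero, zero_div]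
  · have hfne : f ≠ 0 := by
      rintro rfl; rw [zero_mul] at key; exact ha (Polynomial.C_injective (by simpa using key.symm))
    have hdeg : f.natDegree = 0 := by
      have := Polynomial.natDegree_mul hfne hCb
      rw [key] at this
      simpa [Polynomial.natDegree_C] using this.symm
    obtain ⟨r, hr⟩ : ∃ r, f = C r := ⟨f.coeff 0, (Polynomial.eq_C_of_natDegree_eq_zero hdeg)⟩
    have hrb : r * b = a := by
      apply Polynomial.C_injective (R := R)
      rw [map_mul, ← hr, key]
    refine ⟨r, by rwa [Ideal.mem_comap, ← hr], ?_⟩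
    rw [← hab, ← hrb, map_mul, mul_div_assoc, div_self halgb, mul_one]

theorem statement4
    (star : FractionalIdeal (nonZeroDivisors R[X]) L → FractionalIdeal (nonZeroDivisors R[X]) L)
    (hstar : IsStarOperation R[X] L star) (hfc : StarFiniteCharacter R[X] L star)
    (ι : K →+* L) (hι : ∀ r : R, ι (algebraMap R K r) = algebraMap R[X] L (C r))
    (Q : Ideal R[X]) (hQ : IsStarMaximal star Q) (hQR : Q.comap (C : R →+* R[X]) ≠ ⊥) :
    List.TFAE
      [Q = (Q.comap (C : R →+* R[X])).map (C : R →+* R[X]),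
       barStarSet star ι (contentIdeal Q) ⊂ Set.range (algebraMap R K),
       ∀ g ∈ Q, g ≠ 0 → barStarSet star ι (coeffIdeal g) ⊂ Set.range (algebraMap R K)] := by
  obtain ⟨hQbot, hQtop, hQstar, hQmax⟩ := hQ
  have hιone : ι (1 : K) = algebraMap R[X] L 1 := by simpa using hι 1
  tfae_have 1 → 3 := by
    intro h1 g hg hg0
    have hcle : (coeffIdeal g).map (C : R →+* R[X]) ≤ Q := by
      conv_rhs => rw [h1]
      apply Ideal.map_mono
      rw [coeffIdeal, Ideal.span_le]
      rintro a ⟨n, rfl⟩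
      have hgm : g ∈ (Q.comap (C : R →+* R[X])).map (C : R →+* R[X]) := h1 ▸ hg
      exact Ideal.mem_map_C_iff.mp hgm n
    have hsle : star (((coeffIdeal g).map (C : R →+* R[X]) : Ideal R[X]) :
        FractionalIdeal (nonZeroDivisors R[X]) L) ≤
        (Q : FractionalIdeal (nonZeroDivisors R[X]) L) := by
      rw [← hQstar]
      exact hstar.mono _ _ (mapC_coe_ne_zero (coeffIdeal_ne_bot hg0))
        (FractionalIdeal.coeIdeal_ne_zero.mpr hQbot)
        ((FractionalIdeal.coeIdeal_le_coeIdeal (R := R[X]) L).mpr hcle)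
    have hsub : barStarSet star ι (coeffIdeal g) ⊆ Set.range (algebraMap R K) := by
      intro x hx
      have hx' : ι x ∈ star (((coeffIdeal g).map (C : R →+* R[X]) : Ideal R[X]) :
          FractionalIdeal (nonZeroDivisors R[X]) L) := hx
      obtain ⟨f, hfQ, hfx⟩ := (FractionalIdeal.mem_coeIdeal _).mp (hsle hx')
      obtain ⟨r, _, hr⟩ := mem_comap_of_eq ι hι Q hfQ hfx
      exact ⟨r, hr⟩
    rw [Set.ssubset_iff_subset_ne]
    refine ⟨hsub, fun heq => ?_⟩
    have h1K : (1 : K) ∈ barStarSet star ι (coeffIdeal g) := by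
      rw [heq]; exact ⟨1, map_one _⟩
    have h1K' : ι (1 : K) ∈ star (((coeffIdeal g).map (C : R →+* R[X]) : Ideal R[X]) :
        FractionalIdeal (nonZeroDivisors R[X]) L) := h1K
    obtain ⟨f, hfQ, hfx⟩ := (FractionalIdeal.mem_coeIdeal _).mp (hsle h1K')
    have hf1 : f = 1 := IsFractionRing.injective R[X] L (by rw [hfx, hιone])
    exact hQtop (Q.eq_top_iff_one.mpr (hf1 ▸ hfQ))
  tfae_have 3 → 2 := by
    intro h3
    rw [Set.ssubset_iff_subset_ne]
    constructor
    · intro x hx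
      have hx' : ι x ∈ star (((contentIdeal Q).map (C : R →+* R[X]) : Ideal R[X]) :
          FractionalIdeal (nonZeroDivisors R[X]) L) := hx
      obtain ⟨h, hQm, h0, hxh⟩ := fc_reduction star hstar hfc Q hQbot hx'
      exact (h3 h hQm h0).subset hxh
    · intro heq
      have h1K : (1 : K) ∈ barStarSet star ι (contentIdeal Q) := by
        rw [heq]; exact ⟨1, map_one _⟩
      have h1K' : ι (1 : K) ∈ star (((contentIdeal Q).map (C : R →+* R[X]) : Ideal R[X]) :
          FractionalIdeal (nonZeroDivisors R[X]) L) := h1K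
      obtain ⟨h, hQm, h0, hxh⟩ := fc_reduction star hstar hfc Q hQbot h1K'
      have hone : (1 : K) ∈ barStarSet star ι (coeffIdeal h) := hxh
      exact (h3 h hQm h0).not_subset (range_subset_of_one_mem star ι hι _ hone)
  tfae_have 2 → 1 := by
    intro h2
    have hcbot := contentIdeal_ne_bot hQbot
    have hne := mapC_coe_ne_zero (L := L) hcbot
    have hle1 : star (((contentIdeal Q).map (C : R →+* R[X]) : Ideal R[X]) :
        FractionalIdeal (nonZeroDivisors R[X]) L) ≤ 1 := by
      have := hstar.mono _ 1 hne one_ne_zero FractionalIdeal.coeIdeal_le_one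
      rwa [hstar.star_one] at this
    obtain ⟨Q', hQ'⟩ := FractionalIdeal.le_one_iff_exists_coeIdeal.mp hle1
    have hQleQ' : Q ≤ Q' := by
      intro f hf
      have hmem : f ∈ (contentIdeal Q).map (C : R →+* R[X]) :=
        Ideal.mem_map_C_iff.mpr fun n => content_mem Q hf n
      have hmem' : algebraMap R[X] L f ∈ star (((contentIdeal Q).map (C : R →+* R[X]) :
          Ideal R[X]) : FractionalIdeal (nonZeroDivisors R[X]) L) :=
        hstar.le_star _ hne (FractionalIdeal.mem_coeIdeal_of_mem _ hmem)
      rw [← hQ'] at hmem'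
      obtain ⟨f', hf', hff'⟩ := (FractionalIdeal.mem_coeIdeal _).mp hmem'
      rwa [← IsFractionRing.injective R[X] L hff']
    have hQ'bot : Q' ≠ ⊥ := fun h => hQbot (le_bot_iff.mp (h ▸ hQleQ'))
    have hQ'top : Q' ≠ ⊤ := by
      rintro rfl
      have h1K : (1 : K) ∈ barStarSet star ι (contentIdeal Q) := by
        show ι (1 : K) ∈ star _
        rw [hιone, ← hQ']
        exact FractionalIdeal.mem_coeIdeal_of_mem _ Submodule.mem_top
      exact h2.not_subset (range_subset_of_one_mem star ι hι _ h1K)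
    have hstarQ' : star (↑Q') = (Q' : FractionalIdeal (nonZeroDivisors R[X]) L) := by
      rw [hQ']; exact hstar.idem _ hne
    have hQeq : Q = Q' := hQmax Q' hQ'bot hQ'top hstarQ' hQleQ'
    have hcQ : contentIdeal Q ≤ Q.comap (C : R →+* R[X]) := by
      intro a ha
      rw [Ideal.mem_comap]
      have hmem' : algebraMap R[X] L (C a) ∈ (Q' : FractionalIdeal (nonZeroDivisors R[X]) L) := by
        rw [hQ']
        exact hstar.le_star _ hne
          (FractionalIdeal.mem_coeIdeal_of_mem _ (Ideal.mem_map_of_mem _ ha))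
      obtain ⟨f', hf', hff'⟩ := (FractionalIdeal.mem_coeIdeal _).mp hmem'
      rw [hQeq]
      rwa [← IsFractionRing.injective R[X] L hff']
    refine le_antisymm (fun f hf => ?_) Ideal.map_comap_le
    exact Ideal.mem_map_C_iff.mpr fun n => hcQ (content_mem Q hf n)
  tfae_finish
end

section
/- Let R be an integral domain, X an indeterminate over R, and * a star operation of finite character on R[X]. If every upper to zero in R[X] is a *-maximal ideal of R[X], then c(Q)^{\bar{*}} = R for every upper to zero Q in R[X]. -/
open Polynomial

variable {R K L : Type*} [CommRing R] [IsDomain R]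
  [Field K] [Algebra R K] [IsFractionRing R K]
  [Field L] [Algebra R[X] L] [IsFractionRing R[X] L]

section StarOperation

variable {S M : Type*} [CommRing S] [IsDomain S] [Field M] [Algebra S M] [IsFractionRing S M]
  {star : FractionalIdeal (nonZeroDivisors S) M → FractionalIdeal (nonZeroDivisors S) M}

theorem IsStarOperation.exists_coeIdeal_eq_star (hstar : IsStarOperation S M star) {I : Ideal S}
    (hI : I ≠ ⊥) :
    ∃ J : Ideal S, star I = J ∧ I ≤ J ∧ star J = J := by
  have hI0 : (I : FractionalIdeal (nonZeroDivisors S) M) ≠ 0 :=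
    FractionalIdeal.coeIdeal_ne_zero.mpr hI
  have hle_one : star I ≤ 1 := by
    simpa only [hstar.star_one] using
      hstar.mono _ 1 hI0 one_ne_zero FractionalIdeal.coeIdeal_le_one
  obtain ⟨J, hJ⟩ := FractionalIdeal.le_one_iff_exists_coeIdeal.mp hle_one
  refine ⟨J, hJ.symm, ?_, by rw [hJ, hstar.idem _ hI0]⟩
  exact (FractionalIdeal.coeIdeal_le_coeIdeal M).mp (hJ ▸ hstar.le_star _ hI0)

/-- `I^*` is an integral `*`-ideal containing `Q`, so by `*`-maximality it is `Q` or the whole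
ring, and the first is excluded by `I ⊄ Q`. -/
theorem IsStarMaximal.star_eq_one_of_le_of_not_le
    (hstar : IsStarOperation S M star) {Q I : Ideal S} (hQ : IsStarMaximal star Q)
    (hQI : Q ≤ I) (hIQ : ¬I ≤ Q) : star I = 1 := by
  have hI : I ≠ ⊥ := fun h => hQ.1 (le_bot_iff.mp (h ▸ hQI))
  obtain ⟨J, hIJ, hle, hJ⟩ := hstar.exists_coeIdeal_eq_star hI
  have hJ_top : J = ⊤ := by
    by_contra hJ_top
    have hQJ : Q = J := hQ.2.2.2 J (ne_bot_of_le_ne_bot hI hle) hJ_top hJ (hQI.trans hle)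
    exact hIQ (hQJ ▸ hle)
  rw [hIJ, hJ_top, FractionalIdeal.coeIdeal_top]

end StarOperation

theorem le_map_C_contentIdeal {R : Type*} [CommRing R] (Q : Ideal R[X]) :
    Q ≤ (contentIdeal Q).map C := fun f hf =>
  Ideal.mem_map_C_iff.mpr fun n => Ideal.subset_span ⟨f, hf, n, rfl⟩

theorem IsUpperToZero.map_C_contentIdeal_not_le {Q : Ideal R[X]} (hQ : IsUpperToZero Q) :
    ¬(contentIdeal Q).map C ≤ Q := fun h => hQ.2.1 <| le_bot_iff.mp <|
  calc Q ≤ (contentIdeal Q).map C := le_map_C_contentIdeal Q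
    _ ≤ (Q.comap C).map C := Ideal.map_mono (Ideal.map_le_iff_le_comap.mp h)
    _ = ⊥ := by rw [hQ.2.2, Ideal.map_bot]

/-- An element of `K` whose image in `L` comes from `R[X]` lies in `R`: clearing a denominator
`b` gives `C b * f = C a`, so `f` is constant. -/
theorem mem_range_algebraMap_of_map_eq {ι : K →+* L}
    (hι : ∀ r : R, ι (algebraMap R K r) = algebraMap R[X] L (C r)) {x : K} {f : R[X]}
    (hf : algebraMap R[X] L f = ι x) : x ∈ Set.range (algebraMap R K) := by
  obtain ⟨⟨a, b⟩, hab⟩ := IsLocalization.surj (nonZeroDivisors R) x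
  have hb : b.1 ≠ 0 := nonZeroDivisors.ne_zero b.2
  have hfb : f * C b.1 = C a := IsFractionRing.injective R[X] L <| by
    rw [map_mul, hf, ← hι, ← hι, ← map_mul, hab]
  have hf_const : f.natDegree = 0 := by
    rw [← natDegree_mul_C hb, hfb, natDegree_C]
  obtain ⟨r, rfl⟩ := natDegree_eq_zero.mp hf_const
  exact ⟨r, ι.injective (by rw [hι, hf])⟩

theorem barStarSet_eq_range_of_star_eq_one
    {star : FractionalIdeal (nonZeroDivisors R[X]) L → FractionalIdeal (nonZeroDivisors R[X]) L}
    {ι : K →+* L} (hι : ∀ r : R, ι (algebraMap R K r) = algebraMap R[X] L (C r)) {I : Ideal R}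
    (hI : star ((I.map C : Ideal R[X]) : FractionalIdeal (nonZeroDivisors R[X]) L) = 1) :
    barStarSet star ι I = Set.range (algebraMap R K) := by
  ext x
  simp only [barStarSet, Set.mem_ofPred_eq, hI, FractionalIdeal.mem_one_iff]
  constructor
  · rintro ⟨f, hf⟩
    exact mem_range_algebraMap_of_map_eq hι hf
  · rintro ⟨r, rfl⟩
    exact ⟨C r, (hι r).symm⟩

theorem statement5_general
    (star : FractionalIdeal (nonZeroDivisors R[X]) L → FractionalIdeal (nonZeroDivisors R[X]) L)
    (hstar : IsStarOperation R[X] L star)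
    (ι : K →+* L) (hι : ∀ r : R, ι (algebraMap R K r) = algebraMap R[X] L (C r))
    (hUTZ : ∀ Q : Ideal R[X], IsUpperToZero Q → IsStarMaximal star Q) :
    ∀ Q : Ideal R[X], IsUpperToZero Q →
      barStarSet star ι (contentIdeal Q) = Set.range (algebraMap R K) := by
  intro Q hQ
  have hstar_eq_one := (hUTZ Q hQ).star_eq_one_of_le_of_not_le hstar
    (le_map_C_contentIdeal Q) hQ.map_C_contentIdeal_not_le
  exact barStarSet_eq_range_of_star_eq_one hι hstar_eq_one

/-- if every upper to zero in `R[X]` is `*`-maximal, then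
`c(Q)^{\bar{*}} = R` for every upper to zero `Q` in `R[X]`. -/
theorem statement5
    (star : FractionalIdeal (nonZeroDivisors R[X]) L → FractionalIdeal (nonZeroDivisors R[X]) L)
    (hstar : IsStarOperation R[X] L star) (hfc : StarFiniteCharacter R[X] L star)
    (ι : K →+* L) (hι : ∀ r : R, ι (algebraMap R K r) = algebraMap R[X] L (C r))
    (hUTZ : ∀ Q : Ideal R[X], IsUpperToZero Q → IsStarMaximal star Q) :
    ∀ Q : Ideal R[X], IsUpperToZero Q →
      barStarSet star ι (contentIdeal Q) = Set.range (algebraMap R K) :=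
  statement5_general star hstar ι hι hUTZ
end

section
/- Let R be an integral domain, X an indeterminate over R, and * a star operation of finite character on R[X]. Assume that every *-maximal ideal N of R[X] with N ∩ R ≠ (0) satisfies N = (N ∩ R)[X]. If Q ⊄ M[X] for each upper to zero Q in R[X] and each \bar{*}-maximal ideal M of R, then every upper to zero in R[X] is a *-maximal ideal of R[X]. -/
open Polynomial

set_option linter.unusedSectionVars false
set_option maxHeartbeats 1000000

section Aux
variable {S M : Type*} [CommRing S] [IsDomain S] [Field M] [Algebra S M] [IsFractionRing S M]
variable {star : FractionalIdeal (nonZeroDivisors S) M → FractionalIdeal (nonZeroDivisors S) M}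

lemma aux_mem_coeIdeal {I : Ideal S} {a : S} (ha : a ∈ I) :
    algebraMap S M a ∈ (I : FractionalIdeal (nonZeroDivisors S) M) :=
  FractionalIdeal.mem_coeIdeal_of_mem _ ha

lemma aux_mem_of_coe {I : Ideal S} {a : S}
    (ha : algebraMap S M a ∈ (I : FractionalIdeal (nonZeroDivisors S) M)) : a ∈ I := by
  obtain ⟨b, hb, hba⟩ := (FractionalIdeal.mem_coeIdeal _).1 ha
  rwa [← IsFractionRing.injective S M hba]

/-- the star of a nonzero integral ideal is an integral ideal containing it -/
lemma star_coeIdeal_exists (hstar : IsStarOperation S M star) {I : Ideal S} (hI : I ≠ ⊥) :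
    ∃ T : Ideal S, (T : FractionalIdeal (nonZeroDivisors S) M) = star ↑I ∧ I ≤ T := by
  have hI0 : (I : FractionalIdeal (nonZeroDivisors S) M) ≠ 0 := by
    rwa [ne_eq, FractionalIdeal.coeIdeal_eq_zero]
  have h1 : star (I : FractionalIdeal (nonZeroDivisors S) M) ≤ 1 := by
    have := hstar.mono ↑I 1 hI0 one_ne_zero FractionalIdeal.coeIdeal_le_one
    rwa [hstar.star_one] at this
  obtain ⟨T, hT⟩ := FractionalIdeal.le_one_iff_exists_coeIdeal.1 h1
  refine ⟨T, hT, fun a ha => ?_⟩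
  have : algebraMap S M a ∈ star (I : FractionalIdeal (nonZeroDivisors S) M) :=
    hstar.le_star _ hI0 (aux_mem_coeIdeal ha)
  rw [← hT] at this
  exact aux_mem_of_coe this

end Aux
set_option maxHeartbeats 1000000
section Aux
variable {S M : Type*} [CommRing S] [IsDomain S] [Field M] [Algebra S M] [IsFractionRing S M]

lemma chain_finset_mem (c : Set (Ideal S)) (hc : IsChain (· ≤ ·) c) (hne : c.Nonempty) (T : Finset S)
    (hT : ∀ x ∈ T, x ∈ sSup c) : ∃ J ∈ c, ∀ x ∈ T, x ∈ J := by
  classical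
  induction T using Finset.induction with
  | empty => obtain ⟨J, hJ⟩ := hne; exact ⟨J, hJ, by simp⟩
  | @insert a s hnotmem ih =>
    obtain ⟨J, hJ, hJs⟩ := ih (fun x hx => hT x (Finset.mem_insert_of_mem hx))
    have ha : a ∈ sSup c := hT a (Finset.mem_insert_self a s)
    rw [Submodule.mem_sSup_of_directed hne hc.directedOn] at ha
    obtain ⟨J', hJ', haJ'⟩ := ha
    rcases hc.total hJ hJ' with h | h
    · exact ⟨J', hJ', fun x hx => by rcases Finset.mem_insert.1 hx with rfl | hx
                                     exacts [haJ', h (hJs x hx)]⟩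
    · exact ⟨J, hJ, fun x hx => by rcases Finset.mem_insert.1 hx with rfl | hx
                                   exacts [h haJ', hJs x hx]⟩

lemma chain_coeIdeal_ge (c : Set (Ideal S)) (hc : IsChain (· ≤ ·) c) (hne : c.Nonempty)
    (J0 : FractionalIdeal (nonZeroDivisors S) M) (hfg : (J0 : Submodule S M).FG)
    (hle : J0 ≤ ((sSup c : Ideal S) : FractionalIdeal (nonZeroDivisors S) M)) :
    ∃ J ∈ c, J0 ≤ (J : FractionalIdeal (nonZeroDivisors S) M) := by
  classical
  obtain ⟨T, hT⟩ := hfg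
  have hmem : ∀ y : {y // y ∈ T}, ∃ a, a ∈ sSup c ∧ algebraMap S M a = y.1 := by
    rintro ⟨y, hy⟩
    have : y ∈ J0 := by
      rw [← FractionalIdeal.mem_coe, ← hT]
      exact Submodule.subset_span hy
    obtain ⟨a, ha, haa⟩ := (FractionalIdeal.mem_coeIdeal _).1 (hle this)
    exact ⟨a, ha, haa⟩
  choose g hg1 hg2 using hmem
  obtain ⟨J, hJ, hJall⟩ := chain_finset_mem c hc hne (T.attach.image g)
    (by intro x hx
        obtain ⟨y, _, rfl⟩ := Finset.mem_image.1 hx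
        exact hg1 y)
  have hsp : Submodule.span S (T : Set M) ≤ ((J : FractionalIdeal (nonZeroDivisors S) M) : Submodule S M) := by
    refine Submodule.span_le.2 ?_
    intro y hy
    have : algebraMap S M (g ⟨y, hy⟩) = y := hg2 ⟨y, hy⟩
    rw [SetLike.mem_coe, FractionalIdeal.mem_coe, ← this]
    exact FractionalIdeal.mem_coeIdeal_of_mem _ (hJall _ (Finset.mem_image.2 ⟨⟨y, hy⟩, Finset.mem_attach _ _, rfl⟩))
  refine ⟨J, hJ, fun x hx => ?_⟩
  have hx' : x ∈ J0 := hx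
  show x ∈ (J : FractionalIdeal (nonZeroDivisors S) M)
  rw [← FractionalIdeal.mem_coe, ← hT] at hx'
  exact FractionalIdeal.mem_coe.1 (hsp hx')
variable {star : FractionalIdeal (nonZeroDivisors S) M → FractionalIdeal (nonZeroDivisors S) M}

lemma exists_star_maximal (hstar : IsStarOperation S M star) (hfc : StarFiniteCharacter S M star)
    {I : Ideal S} (h0 : I ≠ ⊥) (h1 : I ≠ ⊤)
    (hs : star (I : FractionalIdeal (nonZeroDivisors S) M) = ↑I) :
    ∃ N : Ideal S, I ≤ N ∧ IsStarMaximal star N := by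
  classical
  set s : Set (Ideal S) := {J | J ≠ ⊤ ∧ star (J : FractionalIdeal (nonZeroDivisors S) M) = ↑J ∧ I ≤ J} with hsdef
  have hIs : I ∈ s := ⟨h1, hs, le_rfl⟩
  have hzorn : ∀ c ⊆ s, IsChain (· ≤ ·) c → ∀ y ∈ c, ∃ ub ∈ s, ∀ z ∈ c, z ≤ ub := by
    intro c hcs hchain y hy
    refine ⟨sSup c, ⟨?_, ?_, ?_⟩, fun z hz => le_sSup hz⟩
    · -- sSup c ≠ ⊤
      intro htop
      have h1mem : (1 : S) ∈ sSup c := htop ▸ Submodule.mem_top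
      rw [Submodule.mem_sSup_of_directed ⟨y, hy⟩ hchain.directedOn] at h1mem
      obtain ⟨J, hJ, h1J⟩ := h1mem
      exact (hcs hJ).1 ((Ideal.eq_top_iff_one J).2 h1J)
    · -- star ideal
      have hne : c.Nonempty := ⟨y, hy⟩
      have hIy : I ≤ y := (hcs hy).2.2
      have hU0 : ((sSup c : Ideal S) : FractionalIdeal (nonZeroDivisors S) M) ≠ 0 := by
        rw [ne_eq, FractionalIdeal.coeIdeal_eq_zero]
        intro hbot
        exact h0 (le_bot_iff.1 (hbot ▸ (hIy.trans (le_sSup hy))))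
      refine le_antisymm (fun x hx => ?_) (hstar.le_star _ hU0)
      obtain ⟨J0, hJ0ne, hJ0fg, hJ0le, hxJ0⟩ := (hfc _ hU0 x).1 hx
      obtain ⟨J, hJc, hJ0J⟩ := chain_coeIdeal_ge c hchain hne J0 hJ0fg hJ0le
      have hJ0' : (J : FractionalIdeal (nonZeroDivisors S) M) ≠ 0 := by
        rw [ne_eq, FractionalIdeal.coeIdeal_eq_zero]
        intro hbot
        exact h0 (le_bot_iff.1 (hbot ▸ ((hcs hJc).2.2)))
      have : x ∈ star (J : FractionalIdeal (nonZeroDivisors S) M) :=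
        hstar.mono _ _ hJ0ne hJ0' hJ0J hxJ0
      rw [(hcs hJc).2.1] at this
      obtain ⟨a, ha, rfl⟩ := (FractionalIdeal.mem_coeIdeal _).1 this
      exact FractionalIdeal.mem_coeIdeal_of_mem _ (le_sSup hJc ha)
    · exact (hcs hy).2.2.trans (le_sSup hy)
  obtain ⟨m, hIm, hms, hmax⟩ := zorn_le_nonempty₀ s hzorn I hIs
  refine ⟨m, hIm, ?_, hms.1, hms.2.1, ?_⟩
  · exact fun h => h0 (le_bot_iff.1 (h ▸ hIm))
  · intro J hJ0 hJ1 hJs hmJ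
    exact le_antisymm hmJ (hmax ⟨hJ1, hJs, hIm.trans hmJ⟩ hmJ)

lemma star_maximal_prime (hstar : IsStarOperation S M star)
    {N : Ideal S} (hN : IsStarMaximal star N) : N.IsPrime := by
  obtain ⟨hN0, hN1, hNs, hNmax⟩ := hN
  refine ⟨hN1, ?_⟩
  intro a b hab
  by_contra hcon
  push_neg at hcon
  obtain ⟨haN, hbN⟩ := hcon
  have ha0 : a ≠ 0 := fun h => haN (h ▸ N.zero_mem)
  have hb0 : b ≠ 0 := fun h => hbN (h ▸ N.zero_mem)
  set A : Ideal S := N ⊔ Ideal.span {a} with hA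
  have hA0 : A ≠ ⊥ := fun h => hN0 (le_bot_iff.1 (h ▸ le_sup_left))
  have hAN : N ≤ A := le_sup_left
  have haA : a ∈ A := Ideal.mem_sup_right (Ideal.mem_span_singleton_self a)
  -- star A = 1
  obtain ⟨T, hTeq, hAT⟩ := star_coeIdeal_exists hstar hA0
  have hT1 : T = ⊤ := by
    by_contra hT1
    have hTs : star (T : FractionalIdeal (nonZeroDivisors S) M) = ↑T := by
      rw [hTeq]
      exact hstar.idem _ (by rw [ne_eq, FractionalIdeal.coeIdeal_eq_zero]; exact hA0)
    have := hNmax T (fun h => hA0 (le_bot_iff.1 (h ▸ hAT))) hT1 hTs (hAN.trans hAT)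
    exact haN (this ▸ (hAT haA))
  have hstA : star (A : FractionalIdeal (nonZeroDivisors S) M) = 1 := by
    rw [← hTeq, hT1, FractionalIdeal.coeIdeal_top]
  -- now multiply by b
  have hb0' : algebraMap S M b ≠ 0 := fun h => hb0 (IsFractionRing.injective S M (by rw [h, RingHom.map_zero]))
  have hA0' : (A : FractionalIdeal (nonZeroDivisors S) M) ≠ 0 := by
    rw [ne_eq, FractionalIdeal.coeIdeal_eq_zero]; exact hA0
  have key : FractionalIdeal.spanSingleton (nonZeroDivisors S) (algebraMap S M b) * star ↑A
      = star (↑(Ideal.span {b} * A) : FractionalIdeal (nonZeroDivisors S) M) := by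
    rw [← hstar.smul_eq _ hb0' _ hA0', ← FractionalIdeal.coeIdeal_span_singleton,
      ← FractionalIdeal.coeIdeal_mul]
  have hbA : Ideal.span {b} * A ≤ N := by
    rw [hA, Ideal.mul_sup]
    refine sup_le ?_ ?_
    · exact (Ideal.mul_le_right).trans le_rfl
    · rw [Ideal.span_singleton_mul_span_singleton]
      rw [Ideal.span_le, Set.singleton_subset_iff]
      exact (mul_comm a b) ▸ hab
  have hbA0 : Ideal.span {b} * A ≠ ⊥ := by
    intro h
    have : b * a ∈ Ideal.span {b} * A := Ideal.mul_mem_mul (Ideal.mem_span_singleton_self b) haA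
    rw [h] at this
    exact (mul_ne_zero hb0 ha0) (by simpa using this)
  have hmem : algebraMap S M b ∈ star (↑(Ideal.span {b} * A) : FractionalIdeal (nonZeroDivisors S) M) := by
    rw [← key, hstA, mul_one]
    exact FractionalIdeal.mem_spanSingleton_self _ _
  have : algebraMap S M b ∈ (N : FractionalIdeal (nonZeroDivisors S) M) := by
    rw [← hNs]
    refine hstar.mono _ _ ?_ ?_ ?_ hmem
    · rw [ne_eq, FractionalIdeal.coeIdeal_eq_zero]; exact hbA0
    · rw [ne_eq, FractionalIdeal.coeIdeal_eq_zero]; exact hN0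
    · exact FractionalIdeal.coeIdeal_le_coeIdeal _ |>.2 hbA
  exact hbN (aux_mem_of_coe this)
end Aux

section Poly
variable {R K : Type*} [CommRing R] [IsDomain R] [Field K] [Algebra R K] [IsFractionRing R K]

/-- clearing denominators -/
lemma exists_clear_denom (p : K[X]) :
    ∃ (s : R) (q : R[X]), s ≠ 0 ∧ q.map (algebraMap R K) = C (algebraMap R K s) * p := by
  obtain ⟨b, hb⟩ := IsLocalization.integerNormalization_map_to_map (nonZeroDivisors R) p
  refine ⟨(b : R), IsLocalization.integerNormalization (nonZeroDivisors R) p,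
    nonZeroDivisors.coe_ne_zero b, ?_⟩
  rw [hb, Algebra.smul_def, Polynomial.algebraMap_apply]

lemma phi_injective : Function.Injective (Polynomial.map (algebraMap R K) : R[X] → K[X]) :=
  Polynomial.map_injective _ (IsFractionRing.injective R K)

lemma phi_natDegree (f : R[X]) : (f.map (algebraMap R K)).natDegree = f.natDegree :=
  Polynomial.natDegree_map_eq_of_injective (IsFractionRing.injective R K) f

lemma phi_ne_zero {f : R[X]} (hf : f ≠ 0) : f.map (algebraMap R K) ≠ 0 := by
  intro h
  exact hf (phi_injective (K := K) (by rw [h, Polynomial.map_zero]))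

end Poly

section Gen
variable {R K : Type*} [CommRing R] [IsDomain R] [Field K] [Algebra R K] [IsFractionRing R K]

lemma exists_gen (K : Type*) [Field K] [Algebra R K] [IsFractionRing R K]
    {Q : Ideal R[X]} (hQ : IsUpperToZero Q) :
    ∃ f, f ∈ Q ∧ f ≠ 0 ∧ f.natDegree ≠ 0 ∧
      (∀ g, g ∈ Q ↔ f.map (algebraMap R K) ∣ g.map (algebraMap R K)) ∧
      (∀ A B : K[X], f.map (algebraMap R K) = A * B → A.natDegree = 0 ∨ B.natDegree = 0) := by
  classical
  obtain ⟨hprime, hQbot, hQcomap⟩ := hQ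
  obtain ⟨f0, hf0Q, hf00⟩ := (Submodule.ne_bot_iff Q).1 hQbot
  set SS : Set ℕ := {n | ∃ f, f ∈ Q ∧ f ≠ 0 ∧ f.natDegree = n} with hSS
  have hSSne : SS.Nonempty := ⟨f0.natDegree, f0, hf0Q, hf00, rfl⟩
  obtain ⟨f, hfQ, hf0, hfdeg⟩ := Nat.sInf_mem hSSne
  have hmin : ∀ g, g ∈ Q → g ≠ 0 → f.natDegree ≤ g.natDegree := by
    intro g hg hg0
    rw [hfdeg]
    exact Nat.sInf_le ⟨g, hg, hg0, rfl⟩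
  have hCnotQ : ∀ s : R, s ≠ 0 → C s ∉ Q := by
    intro s hs hmem
    exact hs (by have : s ∈ Q.comap (C : R →+* R[X]) := hmem
                 rwa [hQcomap, Ideal.mem_bot] at this)
  have hfd : f.natDegree ≠ 0 := by
    intro h
    have : f = C (f.coeff 0) := Polynomial.eq_C_of_natDegree_le_zero h.le
    have hc0 : f.coeff 0 ≠ 0 := fun hc => hf0 (by rw [this, hc, Polynomial.C_0])
    exact hCnotQ _ hc0 (this ▸ hfQ)
  have hφf : f.map (algebraMap R K) ≠ 0 := phi_ne_zero hf0
  -- the dvd → mem direction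
  have hmpr : ∀ g, f.map (algebraMap R K) ∣ g.map (algebraMap R K) → g ∈ Q := by
    intro g ⟨k, hk⟩
    obtain ⟨s, w, hs, hw⟩ := exists_clear_denom (R := R) k
    have : ((C s * g : R[X])).map (algebraMap R K) = (f * w).map (algebraMap R K) := by
      rw [Polynomial.map_mul, Polynomial.map_mul, Polynomial.map_C, hk, hw]
      ring
    have heq : C s * g = f * w := phi_injective this
    have : C s * g ∈ Q := heq ▸ Q.mul_mem_right w hfQ
    rcases hprime.mem_or_mem this with h | h
    · exact absurd h (hCnotQ s hs)
    · exact h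
  -- the mem → dvd direction
  have hmp : ∀ g, g ∈ Q → f.map (algebraMap R K) ∣ g.map (algebraMap R K) := by
    intro g hg
    set φf := f.map (algebraMap R K) with hφfdef
    set φg := g.map (algebraMap R K) with hφgdef
    set u := φf.leadingCoeff with hu
    have hu0 : u ≠ 0 := Polynomial.leadingCoeff_ne_zero.2 hφf
    set Mp := φf * C u⁻¹ with hMp
    have hMpm : Mp.Monic := Polynomial.monic_mul_leadingCoeff_inv hφf
    obtain ⟨s, w, hs, hw⟩ := exists_clear_denom (R := R) (C u⁻¹ * (φg /ₘ Mp))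
    set h := C s * g - f * w with hhdef
    have hφh : h.map (algebraMap R K) = C (algebraMap R K s) * (φg %ₘ Mp) := by
      rw [hhdef, Polynomial.map_sub, Polynomial.map_mul, Polynomial.map_mul, Polynomial.map_C, hw]
      have := Polynomial.modByMonic_add_div φg Mp
      calc C (algebraMap R K s) * φg - φf * (C (algebraMap R K s) * (C u⁻¹ * (φg /ₘ Mp)))
          = C (algebraMap R K s) * (φg - (φf * C u⁻¹) * (φg /ₘ Mp)) := by ring
        _ = C (algebraMap R K s) * (φg %ₘ Mp) := by
            rw [← hMp]
            congr 1
            exact (eq_sub_of_add_eq this).symm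
    have hhQ : h ∈ Q := sub_mem (Q.mul_mem_left _ hg) (Q.mul_mem_right _ hfQ)
    by_cases hh0 : h = 0
    · -- remainder zero
      have : C (algebraMap R K s) * (φg %ₘ Mp) = 0 := by rw [← hφh, hh0, Polynomial.map_zero]
      have hs' : (algebraMap R K s) ≠ 0 := fun hc => hs (IsFractionRing.injective R K (by rw [hc, RingHom.map_zero]))
      have hr0 : φg %ₘ Mp = 0 := by
        rcases mul_eq_zero.1 this with h' | h'
        · exact absurd h' (fun hh => hs' (by simpa using hh))
        · exact h'
      refine ⟨C u⁻¹ * (φg /ₘ Mp), ?_⟩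
      have := Polynomial.modByMonic_add_div φg Mp
      rw [hr0, zero_add] at this
      calc φg = Mp * (φg /ₘ Mp) := this.symm
        _ = φf * (C u⁻¹ * (φg /ₘ Mp)) := by rw [hMp]; ring
    · exfalso
      have hr0 : φg %ₘ Mp ≠ 0 := by
        intro hr
        apply hh0
        apply phi_injective (K := K)
        rw [hφh, hr, mul_zero, Polynomial.map_zero]
      have hlt : (φg %ₘ Mp).natDegree < Mp.natDegree :=
        Polynomial.natDegree_lt_natDegree hr0 (Polynomial.degree_modByMonic_lt _ hMpm)
      have hMpdeg : Mp.natDegree = f.natDegree := by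
        rw [hMp, Polynomial.natDegree_mul_leadingCoeff_inv _ hφf, hφfdef, phi_natDegree]
      have hhdeg : h.natDegree = (φg %ₘ Mp).natDegree := by
        rw [← phi_natDegree (K := K) h, hφh]
        exact Polynomial.natDegree_C_mul (fun hc => hs (IsFractionRing.injective R K (by rw [hc, RingHom.map_zero])))
      have := hmin h hhQ hh0
      omega
  refine ⟨f, hfQ, hf0, hfd, fun g => ⟨hmp g, hmpr g⟩, ?_⟩
  -- irreducibility
  intro A B hAB
  have hA0 : A ≠ 0 := fun h => hφf (by rw [hAB, h, zero_mul])
  have hB0 : B ≠ 0 := fun h => hφf (by rw [hAB, h, mul_zero])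
  obtain ⟨s, a, hs, ha⟩ := exists_clear_denom (R := R) A
  obtain ⟨t, b, ht, hb⟩ := exists_clear_denom (R := R) B
  have heq : a * b = C (s * t) * f := by
    apply phi_injective (K := K)
    rw [Polynomial.map_mul, ha, hb, Polynomial.map_mul, Polynomial.map_C, hAB]
    rw [RingHom.map_mul, Polynomial.C_mul]
    ring
  have habQ : a * b ∈ Q := heq ▸ Q.mul_mem_left _ hfQ
  have hs' : (algebraMap R K s) ≠ 0 := fun hc => hs (IsFractionRing.injective R K (by rw [hc, RingHom.map_zero]))
  have ht' : (algebraMap R K t) ≠ 0 := fun hc => ht (IsFractionRing.injective R K (by rw [hc, RingHom.map_zero]))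
  have hdegsum : A.natDegree + B.natDegree = f.natDegree := by
    rw [← Polynomial.natDegree_mul hA0 hB0, ← hAB, phi_natDegree]
  rcases hprime.mem_or_mem habQ with h | h
  · right
    have ha0 : a ≠ 0 := by
      intro hc
      apply hA0
      have : a.map (algebraMap R K) = 0 := by rw [hc, Polynomial.map_zero]
      rw [ha] at this
      rcases mul_eq_zero.1 this with h' | h'
      · exact absurd h' (by simpa using hs')
      · exact h'
    have : f.natDegree ≤ a.natDegree := hmin a h ha0
    have hadeg : a.natDegree = A.natDegree := by
      rw [← phi_natDegree (K := K) a, ha, Polynomial.natDegree_C_mul hs']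
    omega
  · left
    have hb0 : b ≠ 0 := by
      intro hc
      apply hB0
      have : b.map (algebraMap R K) = 0 := by rw [hc, Polynomial.map_zero]
      rw [hb] at this
      rcases mul_eq_zero.1 this with h' | h'
      · exact absurd h' (by simpa using ht')
      · exact h'
    have : f.natDegree ≤ b.natDegree := hmin b h hb0
    have hbdeg : b.natDegree = B.natDegree := by
      rw [← phi_natDegree (K := K) b, hb, Polynomial.natDegree_C_mul ht']
    omega
end Gen

section Upper
variable {R K L : Type*} [CommRing R] [IsDomain R]
  [Field K] [Algebra R K] [IsFractionRing R K]
  [Field L] [Algebra R[X] L] [IsFractionRing R[X] L]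

lemma upper_eq (K : Type*) [Field K] [Algebra R K] [IsFractionRing R K]
    {Q N : Ideal R[X]} (hQ : IsUpperToZero Q) (hN : IsUpperToZero N) (hQN : Q ≤ N) : Q = N := by
  obtain ⟨f, hfQ, hf0, hfd, hfiff, hfirr⟩ := exists_gen K hQ
  obtain ⟨f', hf'N, hf'0, hf'd, hf'iff, _⟩ := exists_gen K hN
  obtain ⟨k, hk⟩ := (hf'iff f).1 (hQN hfQ)
  have hk0 : k ≠ 0 := by
    intro h
    exact phi_ne_zero (K := K) hf0 (by rw [hk, h, mul_zero])
  rcases hfirr _ _ hk with h | h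
  · exfalso
    rw [phi_natDegree] at h
    exact hf'd h
  · -- k is a nonzero constant
    obtain ⟨c, hc⟩ := Polynomial.natDegree_eq_zero.1 h
    have hc0 : c ≠ 0 := fun h' => hk0 (by rw [← hc, h', Polynomial.C_0])
    have hdvd : f.map (algebraMap R K) ∣ f'.map (algebraMap R K) := by
      refine ⟨C c⁻¹, ?_⟩
      rw [hk, ← hc]
      rw [mul_assoc, ← Polynomial.C_mul, mul_inv_cancel₀ hc0, Polynomial.C_1, mul_one]
    refine le_antisymm hQN (fun g hg => ?_)
    exact (hfiff g).2 (hdvd.trans ((hf'iff g).1 hg))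

lemma star_coeIdeal_ne_one
    {star : FractionalIdeal (nonZeroDivisors R[X]) L → FractionalIdeal (nonZeroDivisors R[X]) L}
    (hstar : IsStarOperation R[X] L star) (hfc : StarFiniteCharacter R[X] L star)
    (K : Type*) [Field K] [Algebra R K] [IsFractionRing R K]
    {Q : Ideal R[X]} (hQ : IsUpperToZero Q) :
    star (Q : FractionalIdeal (nonZeroDivisors R[X]) L) ≠ 1 := by
  classical
  obtain ⟨f, hfQ, hf0, hfd, hfiff, _⟩ := exists_gen K hQ
  intro h1
  have hQ0 : (Q : FractionalIdeal (nonZeroDivisors R[X]) L) ≠ 0 := by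
    rw [ne_eq, FractionalIdeal.coeIdeal_eq_zero]; exact hQ.2.1
  have h1mem : (1 : L) ∈ star (Q : FractionalIdeal (nonZeroDivisors R[X]) L) := by
    rw [h1]; exact FractionalIdeal.one_mem_one _
  obtain ⟨J0, hJ0ne, hJ0fg, hJ0le, h1J0⟩ := (hfc _ hQ0 (1 : L)).1 h1mem
  -- replace J0 by an integral f.g. ideal J' ≤ Q
  obtain ⟨T, hT⟩ := hJ0fg
  have hmem : ∀ y : {y // y ∈ T}, ∃ a, a ∈ Q ∧ algebraMap R[X] L a = y.1 := by
    rintro ⟨y, hy⟩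
    have : y ∈ J0 := by
      rw [← FractionalIdeal.mem_coe, ← hT]
      exact Submodule.subset_span hy
    obtain ⟨a, ha, haa⟩ := (FractionalIdeal.mem_coeIdeal _).1 (hJ0le this)
    exact ⟨a, ha, haa⟩
  choose gg hg1 hg2 using hmem
  set A : Finset R[X] := T.attach.image gg with hA
  set J' : Ideal R[X] := Ideal.span (A : Set R[X]) with hJ'
  have hJ'Q : J' ≤ Q := by
    rw [hJ', Ideal.span_le]
    intro a ha
    obtain ⟨y, _, rfl⟩ := Finset.mem_image.1 ha
    exact hg1 y
  have hJ0J' : J0 ≤ (J' : FractionalIdeal (nonZeroDivisors R[X]) L) := by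
    have hsp : Submodule.span R[X] (T : Set L) ≤ ((J' : FractionalIdeal (nonZeroDivisors R[X]) L) : Submodule R[X] L) := by
      refine Submodule.span_le.2 ?_
      intro y hy
      have h2 : algebraMap R[X] L (gg ⟨y, hy⟩) = y := hg2 ⟨y, hy⟩
      rw [SetLike.mem_coe, FractionalIdeal.mem_coe, ← h2]
      refine FractionalIdeal.mem_coeIdeal_of_mem _ ?_
      exact Ideal.subset_span (Finset.mem_image.2 ⟨⟨y, hy⟩, Finset.mem_attach _ _, rfl⟩)
    intro x hx
    have hx' : x ∈ J0 := hx
    show x ∈ (J' : FractionalIdeal (nonZeroDivisors R[X]) L)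
    rw [← FractionalIdeal.mem_coe, ← hT] at hx'
    exact FractionalIdeal.mem_coe.1 (hsp hx')
  -- for each generator, a multiple lands in (f)
  have hdiv : ∀ a ∈ A, ∃ s : R, s ≠ 0 ∧ C s * a ∈ Ideal.span {f} := by
    intro a ha
    obtain ⟨k, hk⟩ := (hfiff a).1 (hJ'Q (Ideal.subset_span ha))
    obtain ⟨s, w, hs, hw⟩ := exists_clear_denom (R := R) k
    refine ⟨s, hs, ?_⟩
    have : C s * a = f * w := by
      apply phi_injective (K := K)
      rw [Polynomial.map_mul, Polynomial.map_mul, Polynomial.map_C, hk, hw]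
      ring
    rw [this]
    exact Ideal.mem_span_singleton.2 ⟨w, rfl⟩
  choose sfun hs1 hs2 using hdiv
  set s : R := ∏ a ∈ A.attach, sfun a.1 a.2 with hsdef
  have hs0 : s ≠ 0 := Finset.prod_ne_zero_iff.2 (fun a _ => hs1 a.1 a.2)
  have hCs : ∀ a ∈ A, C s * a ∈ Ideal.span {f} := by
    intro a ha
    have : s = sfun a ha * ∏ b ∈ (A.attach.erase ⟨a, ha⟩), sfun b.1 b.2 := by
      rw [hsdef, ← Finset.mul_prod_erase A.attach _ (Finset.mem_attach _ ⟨a, ha⟩)]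
    have h2 : C s * a = C (∏ b ∈ (A.attach.erase ⟨a, ha⟩), sfun b.1 b.2) * (C (sfun a ha) * a) := by
      rw [this, Polynomial.C_mul]; ring
    rw [h2]
    exact Ideal.mul_mem_left _ _ (hs2 a ha)
  have hCst : ∀ t ∈ J', C s * t ∈ Ideal.span {f} := by
    intro t ht
    rw [hJ'] at ht
    induction ht using Submodule.span_induction with
    | mem x hx => exact hCs x hx
    | zero => rw [mul_zero]; exact Ideal.zero_mem _
    | add x y _ _ hx hy => rw [mul_add]; exact Ideal.add_mem _ hx hy
    | smul r x _ hx =>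
      rw [smul_eq_mul, ← mul_assoc, mul_comm (C s) r, mul_assoc]
      exact Ideal.mul_mem_left _ _ hx
  have hspan : Ideal.span {C s} * J' ≤ Ideal.span {f} := by
    rw [Ideal.mul_le]
    intro r hr t ht
    obtain ⟨x, rfl⟩ := Ideal.mem_span_singleton'.1 hr
    rw [mul_assoc]
    exact Ideal.mul_mem_left _ _ (hCst t ht)
  have hJ'0 : (J' : FractionalIdeal (nonZeroDivisors R[X]) L) ≠ 0 := by
    intro h
    exact hJ0ne (le_antisymm (h ▸ hJ0J') (FractionalIdeal.zero_le _))
  have hJ'bot : J' ≠ ⊥ := fun h => hJ'0 (by rw [h, FractionalIdeal.coeIdeal_bot])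
  have h1J' : (1 : L) ∈ star (J' : FractionalIdeal (nonZeroDivisors R[X]) L) :=
    hstar.mono _ _ hJ0ne hJ'0 hJ0J' h1J0
  have hCsne : (C s : R[X]) ≠ 0 := Polynomial.C_ne_zero.2 hs0
  have hCs0 : algebraMap R[X] L (C s) ≠ 0 :=
    fun h => hCsne (IsFractionRing.injective R[X] L (by rw [h, RingHom.map_zero]))
  have step1 : algebraMap R[X] L (C s) ∈
      FractionalIdeal.spanSingleton (nonZeroDivisors R[X]) (algebraMap R[X] L (C s)) * star ↑J' := by
    have := FractionalIdeal.mul_mem_mul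
      (FractionalIdeal.mem_spanSingleton_self (nonZeroDivisors R[X]) (algebraMap R[X] L (C s))) h1J'
    simpa using this
  rw [← hstar.smul_eq _ hCs0 _ hJ'0, ← FractionalIdeal.coeIdeal_span_singleton,
    ← FractionalIdeal.coeIdeal_mul] at step1
  have hfne : (f : R[X]) ≠ 0 := hf0
  have hf0' : algebraMap R[X] L f ≠ 0 :=
    fun h => hfne (IsFractionRing.injective R[X] L (by rw [h, RingHom.map_zero]))
  have hstarf : star ((Ideal.span {f} : Ideal R[X]) : FractionalIdeal (nonZeroDivisors R[X]) L)
      = ↑(Ideal.span {f}) := by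
    have := hstar.smul_eq _ hf0' 1 one_ne_zero
    rw [mul_one, hstar.star_one, mul_one] at this
    rw [FractionalIdeal.coeIdeal_span_singleton]
    exact this
  have hmulbot : Ideal.span {C s} * J' ≠ ⊥ := by
    obtain ⟨t, htJ, ht0⟩ := (Submodule.ne_bot_iff J').1 hJ'bot
    intro h
    have : C s * t ∈ Ideal.span {C s} * J' :=
      Ideal.mul_mem_mul (Ideal.mem_span_singleton_self _) htJ
    rw [h, Ideal.mem_bot] at this
    exact (mul_ne_zero hCsne ht0) this
  have hspanfbot : (Ideal.span {f} : Ideal R[X]) ≠ ⊥ := by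
    rw [ne_eq, Ideal.span_singleton_eq_bot]; exact hfne
  have step2 : algebraMap R[X] L (C s) ∈
      ((Ideal.span {f} : Ideal R[X]) : FractionalIdeal (nonZeroDivisors R[X]) L) := by
    rw [← hstarf]
    refine hstar.mono _ _ ?_ ?_ ?_ step1
    · rw [ne_eq, FractionalIdeal.coeIdeal_eq_zero]; exact hmulbot
    · rw [ne_eq, FractionalIdeal.coeIdeal_eq_zero]; exact hspanfbot
    · exact (FractionalIdeal.coeIdeal_le_coeIdeal _).2 hspan
  have : C s ∈ Ideal.span ({f} : Set R[X]) := aux_mem_of_coe step2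
  have hdvd : f ∣ C s := Ideal.mem_span_singleton.1 this
  have := Polynomial.natDegree_le_of_dvd hdvd hCsne
  rw [Polynomial.natDegree_C] at this
  omega
end Upper

variable {R K L : Type*} [CommRing R] [IsDomain R]
  [Field K] [Algebra R K] [IsFractionRing R K]
  [Field L] [Algebra R[X] L] [IsFractionRing R[X] L]

/-- `M` is a `\bar{*}`-maximal ideal of `R`: a proper nonzero integral `\bar{*}`-ideal
maximal among proper integral `\bar{*}`-ideals. -/
def IsBarStarMaximal
    (star : FractionalIdeal (nonZeroDivisors R[X]) L → FractionalIdeal (nonZeroDivisors R[X]) L)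
    (ι : K →+* L) (M : Ideal R) : Prop :=
  M ≠ ⊥ ∧ M ≠ ⊤ ∧ barStarSet star ι M = algebraMap R K '' (M : Set R) ∧
    ∀ J : Ideal R, J ≠ ⊥ → J ≠ ⊤ → barStarSet star ι J = algebraMap R K '' (J : Set R) →
      M ≤ J → M = J

lemma barstar_of_starmax
    {star : FractionalIdeal (nonZeroDivisors R[X]) L → FractionalIdeal (nonZeroDivisors R[X]) L}
    (hstar : IsStarOperation R[X] L star)
    (ι : K →+* L) (hι : ∀ r : R, ι (algebraMap R K r) = algebraMap R[X] L (C r))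
    {N : Ideal R[X]} (hN : IsStarMaximal star N) (hc : N.comap (C : R →+* R[X]) ≠ ⊥)
    (hNe : N = (N.comap (C : R →+* R[X])).map (C : R →+* R[X])) :
    IsBarStarMaximal star ι (N.comap (C : R →+* R[X])) := by
  obtain ⟨hN0, hN1, hNs, hNmax⟩ := hN
  set P : Ideal R := N.comap (C : R →+* R[X]) with hP
  have hP1 : P ≠ ⊤ := by
    intro h
    apply hN1
    rw [Ideal.eq_top_iff_one]
    have : (1 : R) ∈ P := h ▸ Submodule.mem_top
    simpa using (Ideal.mem_comap.1 this : C (1:R) ∈ N)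
  refine ⟨hc, hP1, ?_, ?_⟩
  · -- barStarSet P = image of P
    ext x
    simp only [barStarSet, Set.mem_setOf_eq, ← hNe, hNs]
    constructor
    · intro hx
      obtain ⟨w, hw, hwx⟩ := (FractionalIdeal.mem_coeIdeal _).1 hx
      obtain ⟨⟨a, b⟩, hab⟩ := IsLocalization.mk'_surjective (nonZeroDivisors R) x
      have hspec : x * algebraMap R K (b : R) = algebraMap R K a := by
        rw [← hab]
        exact IsLocalization.mk'_spec K a b
      have hb0 : (b : R) ≠ 0 := nonZeroDivisors.coe_ne_zero b
      have heqL : algebraMap R[X] L (w * C (b : R)) = algebraMap R[X] L (C a) := by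
        rw [RingHom.map_mul, hwx, ← hι, ← hι, ← RingHom.map_mul, hspec]
      have heq : w * C (b : R) = C a := IsFractionRing.injective R[X] L heqL
      have hwdeg : w.natDegree ≤ 0 := by
        rw [Polynomial.natDegree_le_iff_coeff_eq_zero]
        intro n hn
        have hcoeff : w.coeff n * (b : R) = (C a).coeff n := by
          rw [← Polynomial.coeff_mul_C, heq]
        rw [Polynomial.coeff_C, if_neg (by omega)] at hcoeff
        exact (mul_eq_zero.1 hcoeff).resolve_right hb0
      have hwC : w = C (w.coeff 0) := Polynomial.eq_C_of_natDegree_le_zero hwdeg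
      set c := w.coeff 0 with hcdef
      have hcb : c * (b : R) = a := by
        have : C (c * (b : R)) = C a := by rw [Polynomial.C_mul, ← hwC, heq]
        exact Polynomial.C_injective this
      have hxc : x = algebraMap R K c := by
        have hbK : algebraMap R K (b : R) ≠ 0 :=
          fun h => hb0 (IsFractionRing.injective R K (by rw [h, RingHom.map_zero]))
        apply mul_right_cancel₀ hbK
        rw [hspec, ← RingHom.map_mul, hcb]
      refine ⟨c, ?_, hxc.symm⟩
      show c ∈ P
      rw [hP]
      show C c ∈ N
      rwa [← hwC]
    · rintro ⟨p, hp, rfl⟩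
      rw [hι]
      exact FractionalIdeal.mem_coeIdeal_of_mem _ (hp : C p ∈ N)
  · -- maximality
    intro J' hJ'0 hJ'1 hJ's hPJ'
    have hmapne : J'.map (C : R →+* R[X]) ≠ ⊥ := by
      obtain ⟨j, hjJ, hj0⟩ := (Submodule.ne_bot_iff J').1 hJ'0
      intro h
      have : C j ∈ J'.map (C : R →+* R[X]) := Ideal.mem_map_of_mem _ hjJ
      rw [h, Ideal.mem_bot] at this
      exact (Polynomial.C_ne_zero.2 hj0) this
    obtain ⟨T, hTeq, hTge⟩ := star_coeIdeal_exists hstar hmapne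
    have hT1 : T ≠ ⊤ := by
      intro h
      have h1L : (1 : L) ∈ star ((J'.map (C : R →+* R[X]) : Ideal R[X]) :
          FractionalIdeal (nonZeroDivisors R[X]) L) := by
        rw [← hTeq, h, FractionalIdeal.coeIdeal_top]
        exact FractionalIdeal.one_mem_one _
      have h1bar : (1 : K) ∈ barStarSet star ι J' := by
        simp only [barStarSet, Set.mem_setOf_eq, RingHom.map_one]
        exact h1L
      rw [hJ's] at h1bar
      obtain ⟨j, hj, hj1⟩ := h1bar
      have : j = 1 := IsFractionRing.injective R K (by rw [hj1, RingHom.map_one])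
      exact hJ'1 (Ideal.eq_top_iff_one J' |>.2 (this ▸ hj))
    have hTs : star (T : FractionalIdeal (nonZeroDivisors R[X]) L) = ↑T := by
      rw [hTeq]
      exact hstar.idem _ (by rw [ne_eq, FractionalIdeal.coeIdeal_eq_zero]; exact hmapne)
    have hNT : N ≤ T := by
      calc N = P.map (C : R →+* R[X]) := hNe
        _ ≤ J'.map (C : R →+* R[X]) := Ideal.map_mono hPJ'
        _ ≤ T := hTge
    have hT0 : T ≠ ⊥ := fun h => hN0 (le_bot_iff.1 (h ▸ hNT))
    have hNTeq : N = T := hNmax T hT0 hT1 hTs hNT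
    refine le_antisymm hPJ' (fun j hj => ?_)
    have : C j ∈ T := hTge (Ideal.mem_map_of_mem _ hj)
    rw [← hNTeq] at this
    exact this

/-- assume every `*`-maximal ideal `N` of `R[X]` with `N ∩ R ≠ (0)` is extended
from `R`.  If `Q ⊄ M[X]` for each upper to zero `Q` and each `\bar{*}`-maximal ideal `M`
of `R`, then every upper to zero in `R[X]` is `*`-maximal. -/
theorem statement7
    (star : FractionalIdeal (nonZeroDivisors R[X]) L → FractionalIdeal (nonZeroDivisors R[X]) L)
    (hstar : IsStarOperation R[X] L star) (hfc : StarFiniteCharacter R[X] L star)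
    (ι : K →+* L) (hι : ∀ r : R, ι (algebraMap R K r) = algebraMap R[X] L (C r))
    (hext : ∀ N : Ideal R[X], IsStarMaximal star N → N.comap (C : R →+* R[X]) ≠ ⊥ →
      N = (N.comap (C : R →+* R[X])).map (C : R →+* R[X]))
    (hnc : ∀ Q : Ideal R[X], IsUpperToZero Q → ∀ M : Ideal R, IsBarStarMaximal star ι M →
      ¬ Q ≤ M.map (C : R →+* R[X])) :
    ∀ Q : Ideal R[X], IsUpperToZero Q → IsStarMaximal star Q := by
  intro Q hQ
  have h1 : star (Q : FractionalIdeal (nonZeroDivisors R[X]) L) ≠ 1 :=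
    star_coeIdeal_ne_one hstar hfc K hQ
  obtain ⟨T, hTeq, hQT⟩ := star_coeIdeal_exists hstar hQ.2.1
  have hT1 : T ≠ ⊤ := by
    intro h
    rw [h, FractionalIdeal.coeIdeal_top] at hTeq
    exact h1 hTeq.symm
  have hT0 : T ≠ ⊥ := fun h => hQ.2.1 (le_bot_iff.1 (h ▸ hQT))
  have hTs : star (T : FractionalIdeal (nonZeroDivisors R[X]) L) = ↑T := by
    rw [hTeq]
    exact hstar.idem _ (by rw [ne_eq, FractionalIdeal.coeIdeal_eq_zero]; exact hQ.2.1)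
  obtain ⟨N, hTN, hNmax⟩ := exists_star_maximal hstar hfc hT0 hT1 hTs
  have hQN : Q ≤ N := hQT.trans hTN
  by_cases hcomap : N.comap (C : R →+* R[X]) = ⊥
  · have hNupper : IsUpperToZero N := ⟨star_maximal_prime hstar hNmax, hNmax.1, hcomap⟩
    have : Q = N := upper_eq K hQ hNupper hQN
    rw [this]
    exact hNmax
  · exfalso
    have hNe := hext N hNmax hcomap
    have hbar := barstar_of_starmax hstar ι hι hNmax hcomap hNe
    exact hnc Q hQ _ hbar (hQN.trans (le_of_eq hNe))
end

section
/- Let R be an integral domain with quotient field K. The map sending each nonzero R-submodule E of K to E^* = ⋃{(EJ : J) : J a nonzero finitely generated fractional ideal of R}, where (EJ : J) = {x ∈ K : xJ ⊆ EJ}, is a semistar operation of finite character on R. -/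
open Pointwise

/-- A semistar operation has *finite character* if
`E^* = ⋃ {F^* : F nonzero finitely generated, F ⊆ E}`. -/
def SemistarFiniteCharacter (S M : Type*) [CommRing S] [Field M] [Algebra S M]
    (star : Submodule S M → Submodule S M) : Prop :=
  ∀ E : Submodule S M, E ≠ ⊥ → ∀ x : M,
    x ∈ star E ↔ ∃ F : Submodule S M, F ≠ ⊥ ∧ F.FG ∧ F ≤ E ∧ x ∈ star F

/-- The set `E^* = ⋃ {(EJ : J) : J a nonzero finitely generated fractional ideal of S}`,
where `(EJ : J) = {x : xJ ⊆ EJ}`. -/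
def bStarSet {S M : Type*} [CommRing S] [Field M] [Algebra S M] (E : Submodule S M) : Set M :=
  ⋃ J ∈ {J : Submodule S M | J ≠ ⊥ ∧ J.FG ∧ IsFractional (nonZeroDivisors S) J},
    (((E * J) / J : Submodule S M) : Set M)

variable {R K : Type*} [CommRing R] [IsDomain R] [Field K] [Algebra R K] [IsFractionRing R K]

namespace Statement8Aux

open Submodule

/-- The index set: nonzero finitely generated fractional ideals. -/
def goodSet (R K : Type*) [CommRing R] [Field K] [Algebra R K] : Set (Submodule R K) :=
  {J : Submodule R K | J ≠ ⊥ ∧ J.FG ∧ IsFractional (nonZeroDivisors R) J}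

lemma one_mem_good : (1 : Submodule R K) ∈ goodSet R K := by
  refine ⟨?_, ?_, FractionalIdeal.isFractional_of_le_one _ le_rfl⟩
  · rw [Submodule.ne_bot_iff]
    exact ⟨1, one_le.mp le_rfl, one_ne_zero⟩
  · rw [Submodule.one_eq_span]
    exact fg_span_singleton _

lemma mul_mem_good {J₁ J₂ : Submodule R K} (h₁ : J₁ ∈ goodSet R K) (h₂ : J₂ ∈ goodSet R K) :
    J₁ * J₂ ∈ goodSet R K := by
  obtain ⟨hb₁, hf₁, hfr₁⟩ := h₁
  obtain ⟨hb₂, hf₂, hfr₂⟩ := h₂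
  refine ⟨?_, hf₁.mul hf₂, hfr₁.mul hfr₂⟩
  rw [Submodule.ne_bot_iff] at hb₁ hb₂ ⊢
  obtain ⟨x, hx, hx0⟩ := hb₁
  obtain ⟨y, hy, hy0⟩ := hb₂
  exact ⟨x * y, mul_mem_mul hx hy, mul_ne_zero hx0 hy0⟩

/-- Monotonicity of `J ↦ (EJ : J)` along multiplication of the index. -/
lemma div_le_div_mul (E J₁ J₂ : Submodule R K) :
    (E * J₁) / J₁ ≤ (E * (J₁ * J₂)) / (J₁ * J₂) := by
  intro x hx
  rw [mem_div_iff_forall_mul_mem] at hx ⊢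
  intro y hy
  refine Submodule.mul_induction_on hy (fun a ha b hb => ?_) (fun a b ha hb => ?_)
  · rw [← mul_assoc x a b, ← mul_assoc E J₁ J₂]
    exact mul_mem_mul (hx a ha) hb
  · rw [mul_add]
    exact add_mem ha hb

lemma div_mono {E F : Submodule R K} (J : Submodule R K) (h : E ≤ F) :
    (E * J) / J ≤ (F * J) / J := by
  intro x hx
  rw [mem_div_iff_forall_mul_mem] at hx ⊢
  exact fun y hy => mul_le_mul_left h _ (hx y hy)

lemma div_mul_le (X J : Submodule R K) : (X / J) * J ≤ X :=
  Submodule.mul_le.2 fun w hw v hv => mem_div_iff_forall_mul_mem.1 hw v hv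

instance : Nonempty (goodSet R K) := ⟨⟨1, one_mem_good⟩⟩

/-- The b-operation. -/
noncomputable def bStar (E : Submodule R K) : Submodule R K :=
  ⨆ J : goodSet R K, (E * (J : Submodule R K)) / (J : Submodule R K)

lemma bStar_directed (E : Submodule R K) :
    Directed (· ≤ ·) fun J : goodSet R K => (E * (J : Submodule R K)) / (J : Submodule R K) := by
  rintro ⟨J₁, h₁⟩ ⟨J₂, h₂⟩
  refine ⟨⟨J₁ * J₂, mul_mem_good h₁ h₂⟩, div_le_div_mul E J₁ J₂, ?_⟩
  simpa [mul_comm J₂ J₁] using div_le_div_mul E J₂ J₁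

lemma coe_bStar (E : Submodule R K) : (bStar E : Set K) = bStarSet E := by
  rw [bStar, Submodule.coe_iSup_of_directed _ (bStar_directed E), bStarSet]
  rw [Set.biUnion_eq_iUnion]
  rfl

lemma mem_bStar_iff {E : Submodule R K} {x : K} :
    x ∈ bStar E ↔ ∃ J ∈ goodSet R K, x ∈ (E * J) / J := by
  rw [← SetLike.mem_coe, coe_bStar, bStarSet]
  simp only [Set.mem_iUnion, SetLike.mem_coe, exists_prop]
  exact Iff.rfl

lemma le_div_of_mem_good {E J : Submodule R K} (hJ : J ∈ goodSet R K) :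
    (E * J) / J ≤ bStar E :=
  le_iSup (fun J : goodSet R K => (E * (J : Submodule R K)) / (J : Submodule R K)) ⟨J, hJ⟩

lemma le_bStar (E : Submodule R K) : E ≤ bStar E := by
  refine le_trans ?_ (le_div_of_mem_good one_mem_good)
  intro x hx
  rw [mem_div_iff_forall_mul_mem]
  exact fun y hy => mul_mem_mul hx hy

lemma bStar_mono {E F : Submodule R K} (h : E ≤ F) : bStar E ≤ bStar F := by
  refine iSup_le fun ⟨J, hJ⟩ => ?_
  exact le_trans (div_mono J h) (le_div_of_mem_good hJ)

/-- Combine finitely many directed memberships. -/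
lemma finset_bound {α : Type*} {P : Submodule R K → Prop} {g : Submodule R K → Submodule R K}
    (hne : ∃ J, P J)
    (hdir : ∀ J₁ J₂, P J₁ → P J₂ → ∃ J₃, P J₃ ∧ g J₁ ≤ g J₃ ∧ g J₂ ≤ g J₃)
    (s : Finset α) (y : α → K)
    (h : ∀ a ∈ s, ∃ J, P J ∧ y a ∈ g J) : ∃ J, P J ∧ ∀ a ∈ s, y a ∈ g J := by
  classical
  induction s using Finset.induction_on with
  | empty =>
    obtain ⟨J, hJ⟩ := hne
    exact ⟨J, hJ, fun a ha => absurd ha (Finset.notMem_empty a)⟩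
  | insert _ _ ha ih =>
    rename_i a s
    obtain ⟨J₁, hJ₁, hy₁⟩ := h a (Finset.mem_insert_self a s)
    obtain ⟨J₂, hJ₂, hy₂⟩ := ih fun b hb => h b (Finset.mem_insert_of_mem hb)
    obtain ⟨J₃, hJ₃, h₁₃, h₂₃⟩ := hdir J₁ J₂ hJ₁ hJ₂
    refine ⟨J₃, hJ₃, fun b hb => ?_⟩
    rcases Finset.mem_insert.1 hb with rfl | hb
    · exact h₁₃ hy₁
    · exact h₂₃ (hy₂ b hb)

lemma mem_div_of_forall_gen {W J : Submodule R K} {s : Finset K} (hJ : J = span R (s : Set K))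
    {x : K} (h : ∀ a ∈ s, x * a ∈ W) : x ∈ W / J := by
  rw [mem_div_iff_forall_mul_mem]
  intro y hy
  rw [hJ] at hy
  induction hy using Submodule.span_induction with
  | mem a ha => exact h a ha
  | zero => simpa using W.zero_mem
  | add a b _ _ ha hb => rw [mul_add]; exact W.add_mem ha hb
  | smul r a _ ha => rw [mul_smul_comm]; exact W.smul_mem r ha

/-- Idempotence, hard direction. -/
lemma bStar_idem_le (E : Submodule R K) : bStar (bStar E) ≤ bStar E := by
  refine iSup_le ?_
  rintro ⟨J, hJ⟩ x hx
  obtain ⟨s, hs⟩ := hJ.2.1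
  -- every element of (bStar E) * J is in ((E J')/J') * J for some good J'
  have key : ∀ y ∈ bStar E * J, ∃ J' ∈ goodSet R K, y ∈ ((E * J') / J') * J := by
    intro y hy
    refine Submodule.mul_induction_on hy (fun e he b hb => ?_) (fun y₁ y₂ hy₁ hy₂ => ?_)
    · obtain ⟨J', hJ', he'⟩ := mem_bStar_iff.1 he
      exact ⟨J', hJ', mul_mem_mul he' hb⟩
    · obtain ⟨J₁, hJ₁, h₁⟩ := hy₁
      obtain ⟨J₂, hJ₂, h₂⟩ := hy₂
      refine ⟨J₁ * J₂, mul_mem_good hJ₁ hJ₂, add_mem ?_ ?_⟩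
      · exact mul_le_mul_left (div_le_div_mul E J₁ J₂) _ h₁
      · exact (show (E * J₂) / J₂ * J ≤ (E * (J₁ * J₂)) / (J₁ * J₂) * J from mul_le_mul_left (by simpa [mul_comm J₂ J₁] using div_le_div_mul E J₂ J₁) J) h₂
  -- bound all generators simultaneously
  have hmem : ∀ a ∈ s, ∃ J', (J' ∈ goodSet R K) ∧ x * a ∈ ((E * J') / J') * J := by
    intro a ha
    have haJ : a ∈ J := by rw [hs.symm] at *; exact subset_span ha
    obtain ⟨J', hJ', h'⟩ := key (x * a) (mem_div_iff_forall_mul_mem.1 hx a haJ)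
    exact ⟨J', hJ', h'⟩
  obtain ⟨J'', hJ'', hall⟩ := finset_bound ⟨1, one_mem_good⟩
    (fun J₁ J₂ h₁ h₂ => ⟨J₁ * J₂, mul_mem_good h₁ h₂,
      mul_le_mul_left (div_le_div_mul E J₁ J₂) J,
      mul_le_mul_left (by simpa [mul_comm J₂ J₁] using div_le_div_mul E J₂ J₁) J⟩)
    s (fun a => x * a) hmem
  -- x • J ⊆ ((E J'')/J'') * J
  have hxJ : x ∈ (((E * J'') / J'') * J) / J := mem_div_of_forall_gen hs.symm hall
  -- conclude x ∈ (E (J J'') : J J'')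
  have : x ∈ (E * (J * J'')) / (J * J'') := by
    rw [mem_div_iff_forall_mul_mem]
    intro y hy
    refine Submodule.mul_induction_on hy (fun u hu v hv => ?_) (fun a b ha hb => ?_)
    · have h1 : x * u ∈ ((E * J'') / J'') * J := mem_div_iff_forall_mul_mem.1 hxJ u hu
      have h2 : x * u * v ∈ (((E * J'') / J'') * J) * J'' := mul_mem_mul h1 hv
      have h3 : (((E * J'') / J'') * J) * J'' ≤ E * (J * J'') := by
        rw [mul_right_comm]
        calc ((E * J'') / J'') * J'' * J ≤ (E * J'') * J :=
              mul_le_mul_left (div_mul_le _ _) _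
          _ = E * (J * J'') := by rw [mul_assoc, mul_comm J'' J]
      rw [← mul_assoc x u v]
      exact h3 h2
    · rw [mul_add]; exact add_mem ha hb
  exact le_div_of_mem_good (mul_mem_good hJ hJ'') this

/-- Scaling: `((a•E)J : J) = a • ((EJ : J))` for `a ≠ 0`. -/
lemma smul_div (a : K) (ha : a ≠ 0) (E J : Submodule R K) :
    ((a • E) * J) / J = a • ((E * J) / J) := by
  have hsm : (a • E) * J = a • (E * J) := by
    rw [← Submodule.span_singleton_mul, ← Submodule.span_singleton_mul, mul_assoc]
  rw [hsm]
  ext x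
  rw [mem_div_iff_forall_mul_mem]
  constructor
  · intro h
    have : a⁻¹ * x ∈ (E * J) / J := by
      rw [mem_div_iff_forall_mul_mem]
      intro y hy
      obtain ⟨d, hd, hdx⟩ : ∃ d ∈ E * J, a • d = x * y := by
        have := h y hy
        rw [← SetLike.mem_coe, Submodule.coe_pointwise_smul, Set.mem_smul_set] at this
        obtain ⟨d, hd, hdx⟩ := this
        exact ⟨d, hd, hdx⟩
      have : a⁻¹ * x * y = d := by
        rw [mul_assoc, ← hdx, smul_eq_mul, ← mul_assoc, inv_mul_cancel₀ ha, one_mul]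
      rw [this]; exact hd
    have := smul_mem_pointwise_smul _ a _ this
    rwa [smul_eq_mul, ← mul_assoc, mul_inv_cancel₀ ha, one_mul] at this
  · intro h y hy
    rw [← SetLike.mem_coe, Submodule.coe_pointwise_smul, Set.mem_smul_set] at h
    obtain ⟨d, hd, rfl⟩ := h
    rw [smul_eq_mul, mul_assoc]
    exact smul_mem_pointwise_smul _ a _ (mem_div_iff_forall_mul_mem.1 hd y hy)

lemma bStar_smul (a : K) (ha : a ≠ 0) (E : Submodule R K) :
    bStar (a • E) = a • bStar E := by
  apply SetLike.coe_injective
  rw [Submodule.coe_pointwise_smul, coe_bStar, coe_bStar, bStarSet, bStarSet,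
    Set.smul_set_iUnion₂]
  refine Set.iUnion₂_congr fun J hJ => ?_
  rw [smul_div a ha E J, Submodule.coe_pointwise_smul]

/-- Finite character: elements of `E * J` come from f.g. submodules of `E`. -/
lemma exists_fg_of_mem_mul {E J : Submodule R K} {y : K} (hy : y ∈ E * J) :
    ∃ F : Submodule R K, F.FG ∧ F ≤ E ∧ y ∈ F * J := by
  refine Submodule.mul_induction_on hy (fun e he b hb => ?_) (fun y₁ y₂ hy₁ hy₂ => ?_)
  · exact ⟨span R {e}, fg_span_singleton e, by rwa [span_le, Set.singleton_subset_iff],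
      mul_mem_mul (subset_span rfl) hb⟩
  · obtain ⟨F₁, hf₁, hle₁, h₁⟩ := hy₁
    obtain ⟨F₂, hf₂, hle₂, h₂⟩ := hy₂
    exact ⟨F₁ ⊔ F₂, hf₁.sup hf₂, sup_le hle₁ hle₂,
      add_mem (mul_le_mul_left (le_sup_left : F₁ ≤ F₁ ⊔ F₂) J h₁) (mul_le_mul_left (le_sup_right : F₂ ≤ F₁ ⊔ F₂) J h₂)⟩

lemma bStar_finchar : SemistarFiniteCharacter R K (bStar (R := R) (K := K)) := by
  intro E hE x
  constructor
  · intro hx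
    obtain ⟨J, hJ, hxJ⟩ := mem_bStar_iff.1 hx
    obtain ⟨s, hs⟩ := hJ.2.1
    obtain ⟨e₀, he₀, he₀0⟩ := (Submodule.ne_bot_iff E).1 hE
    have hmem : ∀ a ∈ s, ∃ F : Submodule R K, (F.FG ∧ F ≤ E) ∧ x * a ∈ F * J := by
      intro a ha
      have haJ : a ∈ J := hs ▸ subset_span ha
      obtain ⟨F, hf, hle, h⟩ := exists_fg_of_mem_mul (mem_div_iff_forall_mul_mem.1 hxJ a haJ)
      exact ⟨F, ⟨hf, hle⟩, h⟩
    obtain ⟨F₀, ⟨hF₀fg, hF₀le⟩, hall⟩ := finset_bound (P := fun F => F.FG ∧ F ≤ E)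
      (g := fun F => F * J) ⟨⊥, fg_bot, bot_le⟩
      (fun F₁ F₂ h₁ h₂ => ⟨F₁ ⊔ F₂, ⟨h₁.1.sup h₂.1, sup_le h₁.2 h₂.2⟩,
        mul_le_mul_left le_sup_left _, mul_le_mul_left le_sup_right _⟩)
      s (fun a => x * a) hmem
    set F := F₀ ⊔ span R {e₀} with hF
    have hFfg : F.FG := hF₀fg.sup (fg_span_singleton e₀)
    have hFle : F ≤ E := sup_le hF₀le (by rwa [span_le, Set.singleton_subset_iff])
    have hFne : F ≠ ⊥ := by
      rw [Submodule.ne_bot_iff]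
      exact ⟨e₀, Submodule.mem_sup_right (subset_span rfl : e₀ ∈ span R {e₀}), he₀0⟩
    refine ⟨F, hFne, hFfg, hFle, ?_⟩
    have : x ∈ (F * J) / J :=
      mem_div_of_forall_gen hs.symm fun a ha =>
        mul_le_mul_left (le_sup_left : F₀ ≤ F) J (hall a ha)
    exact le_div_of_mem_good hJ this
  · rintro ⟨F, _, _, hle, hx⟩
    exact bStar_mono hle hx

end Statement8Aux

/-- `E ↦ ⋃ {(EJ : J)}` is a semistar operation of finite character on `R`. -/
theorem statement8 :
    ∃ star : Submodule R K → Submodule R K,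
      IsSemistarOperation R K star ∧ SemistarFiniteCharacter R K star ∧
        ∀ E : Submodule R K, E ≠ ⊥ → (star E : Set K) = bStarSet E := by
  classical
  refine ⟨Statement8Aux.bStar, ?_, Statement8Aux.bStar_finchar, fun E _ =>
    Statement8Aux.coe_bStar E⟩
  refine ⟨fun a ha E _ => Statement8Aux.bStar_smul a ha E,
    fun E _ => Statement8Aux.le_bStar E,
    fun E F _ _ h => Statement8Aux.bStar_mono h,
    fun E _ => le_antisymm (Statement8Aux.bStar_idem_le E)
      (Statement8Aux.le_bStar _)⟩
end

section
/- Let R be an integrally closed integral domain with quotient field K, and define, for nonzero fractional ideals I of R, I^* = ⋃{(IJ : J) : J a nonzero finitely generated fractional ideal of R}, where (IJ : J) = {x ∈ K : xJ ⊆ IJ}. Then the *-maximal ideals of R are exactly the maximal ideals of R; that is, a proper nonzero integral ideal Q of R is *-maximal if and only if Q is a maximal ideal of R. -/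
/-!
If `x J ⊆ M J` for a maximal ideal `M` and a nonzero finitely generated `J`, then `x J ⊆ J`,
so `x` is integral over `R` and hence lies in `R`. Were `x ∉ M`, then `x` and `M` would generate
`R`, giving `J ⊆ M J`, which Nakayama's lemma rules out in the torsion-free module `K`. So every
maximal ideal is a `*`-ideal, and as every proper ideal lies in a maximal one, the `*`-maximal
ideals are exactly the maximal ideals.
-/

open Pointwise

variable {R K : Type*} [CommRing R] [IsDomain R] [Field K] [Algebra R K] [IsFractionRing R K]

/-- The image of an integral ideal of `R` in the quotient field `K`. -/
def idealToSub (R : Type*) {K : Type*} [CommRing R] [Field K] [Algebra R K]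
    (Q : Ideal R) : Submodule R K :=
  Submodule.map (Algebra.linearMap R K) Q

theorem Ideal.le_of_smul_le_smul_of_isMaximal {A N : Type*} [CommRing A] [IsDomain A]
    [AddCommGroup N] [Module A N] [Module.IsTorsionFree A N]
    {I M : Ideal A} (hM : M.IsMaximal) {J : Submodule A N} (hJ0 : J ≠ ⊥) (hJ : J.FG)
    (hIJ : I • J ≤ M • J) : I ≤ M := by
  by_contra hIM
  have hJle : J ≤ M • J :=
    calc J = (M ⊔ I) • J := by
          rw [(hM.1.not_le_iff_codisjoint.1 hIM).eq_top, Submodule.top_smul]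
      _ ≤ M • J := by rw [Submodule.sup_smul]; exact sup_le le_rfl hIJ
  -- Nakayama: some `r ∈ M` fixes `J` pointwise, and torsion-freeness forces `r = 1`.
  obtain ⟨r, hrM, hr⟩ := Submodule.exists_mem_and_smul_eq_self_of_fg_of_le_smul M J hJ hJle
  obtain ⟨n, hnJ, hn0⟩ := Submodule.exists_mem_ne_zero_of_ne_bot hJ0
  have hr1 : r = 1 := by
    have : (r - 1) • n = 0 := by rw [sub_smul, one_smul, hr n hnJ, sub_self]
    simpa [sub_eq_zero, hn0] using this
  exact hM.ne_top ((Ideal.eq_top_iff_one M).2 (hr1 ▸ hrM))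

section

variable {A L : Type*} [CommRing A] [Field L] [Algebra A L]

lemma idealToSub_le_one (I : Ideal A) : (idealToSub A I : Submodule A L) ≤ 1 := by
  rintro _ ⟨r, _, rfl⟩
  exact Submodule.mem_one.2 ⟨r, rfl⟩

lemma idealToSub_mul_le_smul (I : Ideal A) (J : Submodule A L) :
    idealToSub A I * J ≤ I • J := by
  refine Submodule.mul_le.2 ?_
  rintro _ ⟨r, hr, rfl⟩ n hn
  rw [Algebra.linearMap_apply, ← Algebra.smul_def]
  exact Submodule.smul_mem_smul hr hn

lemma subset_bStarSet (E : Submodule A L) : (E : Set L) ⊆ bStarSet E := by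
  intro x hx
  have hone : (1 : Submodule A L) ≠ ⊥ :=
    (Submodule.ne_bot_iff _).2 ⟨1, Submodule.one_le.1 le_rfl, one_ne_zero⟩
  have hfg : (1 : Submodule A L).FG :=
    Submodule.one_eq_span (R := A) (A := L) ▸ Submodule.fg_span_singleton 1
  refine Set.mem_biUnion (x := 1) ⟨hone, hfg, FractionalIdeal.isFractional_of_le_one _ le_rfl⟩ ?_
  exact Submodule.le_div_iff_mul_le.2 le_rfl hx

lemma isIntegral_of_mem_mul_div {E J : Submodule A L} (hE : E ≤ 1) (hJ0 : J ≠ ⊥) (hJ : J.FG)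
    {x : L} (hx : x ∈ E * J / J) : IsIntegral A x :=
  isIntegral_of_smul_mem_submodule J hJ0 hJ x fun n hn =>
    one_mul J ▸ mul_le_mul_left hE J (Submodule.mem_div_iff_forall_mul_mem.1 hx n hn)

end

lemma bStarSet_idealToSub_of_isMaximal [IsIntegrallyClosed R] {M : Ideal R} (hM : M.IsMaximal) :
    bStarSet (idealToSub R M : Submodule R K) = ((idealToSub R M : Submodule R K) : Set K) := by
  refine (Set.iUnion₂_subset fun J ⟨hJ0, hJfg, _⟩ x hx => ?_).antisymm (subset_bStarSet _)
  obtain ⟨r, rfl⟩ := IsIntegrallyClosed.isIntegral_iff.1 <|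
    isIntegral_of_mem_mul_div (idealToSub_le_one M) hJ0 hJfg hx
  have hrM : Ideal.span {r} ≤ M := Ideal.le_of_smul_le_smul_of_isMaximal hM hJ0 hJfg <|
    Submodule.smul_le.2 fun s hs n hn => by
      obtain ⟨a, rfl⟩ := Ideal.mem_span_singleton'.1 hs
      rw [mul_smul, Algebra.smul_def r n]
      exact Submodule.smul_mem _ a <|
        idealToSub_mul_le_smul M J (Submodule.mem_div_iff_forall_mul_mem.1 hx n hn)
  exact ⟨r, (Ideal.span_singleton_le_iff_mem M).1 hrM, rfl⟩

/-- for `R` integrally closed and `*` defined by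
`I^* = ⋃ {(IJ : J) : J nonzero f.g. fractional ideal}`, a proper nonzero integral ideal
`Q` of `R` is `*`-maximal iff `Q` is a maximal ideal of `R`. -/
theorem statement10 [IsIntegrallyClosed R] (Q : Ideal R) (hQ0 : Q ≠ ⊥) (hQt : Q ≠ ⊤) :
    (bStarSet (idealToSub R Q : Submodule R K) = ((idealToSub R Q : Submodule R K) : Set K) ∧
      ∀ J : Ideal R, J ≠ ⊥ → J ≠ ⊤ →
        bStarSet (idealToSub R J : Submodule R K) = ((idealToSub R J : Submodule R K) : Set K) →
        Q ≤ J → Q = J) ↔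
      Q.IsMaximal := by
  refine ⟨fun ⟨_, hQmax⟩ => ?_, fun hQ => ⟨bStarSet_idealToSub_of_isMaximal hQ,
    fun J _ hJt _ hQJ => hQ.eq_of_le hJt hQJ⟩⟩
  obtain ⟨M, hM, hQM⟩ := Ideal.exists_le_maximal Q hQt
  have hM0 : M ≠ ⊥ := ne_bot_of_le_ne_bot hQ0 hQM
  exact hQmax M hM0 hM.ne_top (bStarSet_idealToSub_of_isMaximal hM) hQM ▸ hM
end

section
/- Let R be an integrally closed integral domain with quotient field K and X an indeterminate over R. Let *_X denote the operation on R[X] defined by E^{*_X} = ⋃{(EJ : J) : J a nonzero finitely generated fractional ideal of R[X]} and *_R the operation on R defined by E^{*_R} = ⋃{(EJ : J) : J a nonzero finitely generated fractional ideal of R}, where in each case (EJ : J) = {x : xJ ⊆ EJ} inside the respective quotient field. Then the star operation on R induced by *_X equals *_R; that is, for every nonzero fractional ideal I of R, (I[X])^{*_X} ∩ K = I^{*_R}, where I[X] denotes the R[X]-submodule of K(X) generated by I. -/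
set_option linter.unusedSectionVars false
set_option linter.unnecessarySimpa false
set_option maxHeartbeats 1000000


open Pointwise

variable {R K : Type*} [CommRing R] [IsDomain R] [Field K] [Algebra R K] [IsFractionRing R K]

open Polynomial

variable {L : Type*} [Field L] [Algebra R[X] L] [IsFractionRing R[X] L]

namespace Stmt12
open Submodule

theorem pow_mono {A B : Submodule R K} (h : A ≤ B) (m : ℕ) : A ^ m ≤ B ^ m := by
  induction m with
  | zero => simp
  | succ m ih => rw [pow_succ, pow_succ]; exact mul_le_mul' ih h

theorem exists_fg_pow {P : Submodule R K} {m : ℕ} {z : K} (hz : z ∈ P ^ m) :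
    ∃ Q : Submodule R K, Q.FG ∧ Q ≤ P ∧ z ∈ Q ^ m := by
  induction m generalizing z with
  | zero => exact ⟨⊥, fg_bot, bot_le, by simpa using hz⟩
  | succ m ih =>
    rw [pow_succ] at hz
    refine Submodule.mul_induction_on hz ?_ ?_
    · intro u hu v hv
      obtain ⟨Q₀, hfg, hle, hu⟩ := ih hu
      refine ⟨Q₀ ⊔ span R {v}, hfg.sup (fg_span_singleton v),
        sup_le hle (span_le.mpr (Set.singleton_subset_iff.mpr hv)), ?_⟩
      rw [pow_succ]
      exact mul_le_mul' (pow_mono le_sup_left m)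
        (le_sup_right.trans_eq' (by rfl))
        (mul_mem_mul hu (mem_span_singleton_self v))
    · intro u v hu hv
      obtain ⟨Q₁, hfg₁, hle₁, hu⟩ := hu
      obtain ⟨Q₂, hfg₂, hle₂, hv⟩ := hv
      refine ⟨Q₁ ⊔ Q₂, hfg₁.sup hfg₂, sup_le hle₁ hle₂, ?_⟩
      rw [pow_succ] at *
      exact add_mem (mul_le_mul' (pow_mono le_sup_left m) le_sup_left hu)
        (mul_le_mul' (pow_mono le_sup_right m) le_sup_right hv)

theorem isFractional_one : IsFractional (nonZeroDivisors R) (1 : Submodule R K) := by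
  rw [Submodule.one_eq_span]
  exact FractionalIdeal.isFractional_span_singleton 1

theorem isFractional_pow {A : Submodule R K}
    (h : IsFractional (nonZeroDivisors R) A) (m : ℕ) :
    IsFractional (nonZeroDivisors R) (A ^ m) := by
  induction m with
  | zero => rw [pow_zero]; exact isFractional_one
  | succ m ih => rw [pow_succ]; exact ih.mul h

theorem isFractional_biSup (s : Finset ℕ) (T : ℕ → Submodule R K)
    (hT : ∀ k ∈ s, IsFractional (nonZeroDivisors R) (T k)) :
    IsFractional (nonZeroDivisors R) (⨆ k ∈ s, T k) := by
  classical
  induction s using Finset.induction_on with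
  | empty =>
    simp only [Finset.notMem_empty, iSup_false, iSup_bot]
    exact ⟨1, one_mem _, fun b hb => by
      rw [Submodule.mem_bot] at hb
      exact ⟨0, by rw [hb, smul_zero, map_zero]⟩⟩
  | @insert a s ha ih =>
    rw [Finset.iSup_insert]
    exact (hT a (Finset.mem_insert_self a s)).sup
      (ih fun k hk => hT k (Finset.mem_insert_of_mem hk))

theorem fg_biSup (s : Finset ℕ) (T : ℕ → Submodule R K) (hT : ∀ k ∈ s, (T k).FG) :
    (⨆ k ∈ s, T k).FG := by
  classical
  induction s using Finset.induction_on with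
  | empty => simpa using fg_bot
  | @insert a s ha ih =>
    rw [Finset.iSup_insert]
    exact (hT a (Finset.mem_insert_self a s)).sup
      (ih fun k hk => hT k (Finset.mem_insert_of_mem hk))

theorem algebraMap_mem_pow (a : Ideal R) {A : Submodule R K}
    (ha : ∀ r ∈ a, algebraMap R K r ∈ A) {m : ℕ} {r : R} (hr : r ∈ a ^ m) :
    algebraMap R K r ∈ A ^ m := by
  have h1 : Submodule.map (Algebra.ofId R K).toLinearMap a ≤ A := by
    rintro _ ⟨u, hu, rfl⟩
    exact ha u hu
  have h2 : algebraMap R K r ∈ Submodule.map (Algebra.ofId R K).toLinearMap (a ^ m) :=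
    ⟨r, hr, rfl⟩
  rw [Submodule.map_pow] at h2
  exact pow_mono h1 m h2

theorem rep_mul_span {E : Submodule R[X] L} {n : ℕ} {g : Fin n → L} {z : L}
    (hz : z ∈ E * span R[X] (Set.range g)) :
    ∃ e : Fin n → L, (∀ j, e j ∈ E) ∧ z = ∑ j, e j * g j := by
  refine Submodule.mul_induction_on hz ?_ ?_
  · intro u hu v hv
    induction hv using Submodule.span_induction with
    | mem w h =>
      obtain ⟨j, rfl⟩ := h
      classical
      refine ⟨fun j' => if j' = j then u else 0, fun j' => by dsimp only; split <;> simp [hu], ?_⟩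
      rw [Finset.sum_eq_single j (fun b _ hb => by dsimp only; rw [if_neg hb, zero_mul])
        (fun h => absurd (Finset.mem_univ j) h)]
      dsimp only; rw [if_pos rfl]
    | zero => exact ⟨0, by simp, by simp⟩
    | add u' v' _ _ h1 h2 =>
      obtain ⟨e₁, he₁, hs₁⟩ := h1
      obtain ⟨e₂, he₂, hs₂⟩ := h2
      exact ⟨e₁ + e₂, fun j => add_mem (he₁ j) (he₂ j), by
        rw [mul_add, hs₁, hs₂, ← Finset.sum_add_distrib]
        exact Finset.sum_congr rfl fun j _ => (add_mul _ _ _).symm⟩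
    | smul r w _ h1 =>
      obtain ⟨e, he, hs⟩ := h1
      refine ⟨fun j => r • e j, fun j => smul_mem _ _ (he j), ?_⟩
      rw [mul_smul_comm, hs, Finset.smul_sum]
      exact Finset.sum_congr rfl fun j _ => (smul_mul_assoc _ _ _).symm
  · intro u v hu hv
    obtain ⟨e₁, he₁, hs₁⟩ := hu
    obtain ⟨e₂, he₂, hs₂⟩ := hv
    exact ⟨e₁ + e₂, fun j => add_mem (he₁ j) (he₂ j), by
      rw [hs₁, hs₂, ← Finset.sum_add_distrib]
      exact Finset.sum_congr rfl fun j _ => (add_mul _ _ _).symm⟩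

variable (ι : K →+* L)

noncomputable def emap (A : Submodule R K) : Submodule R[X] L :=
  Submodule.span R[X] (ι '' (A : Set K))

theorem mem_emap_of_mem {A : Submodule R K} {a : K} (ha : a ∈ A) : ι a ∈ emap ι A :=
  subset_span ⟨a, ha, rfl⟩

variable (hι : ∀ r : R, ι (algebraMap R K r) = algebraMap R[X] L (C r))

include hι

variable (hι : ∀ r : R, ι (algebraMap R K r) = algebraMap R[X] L (C r))

include hι

theorem smul_ι (r : R) (a : K) : ι (r • a) = (C r) • ι a := by
  rw [Algebra.smul_def, map_mul, hι, Algebra.smul_def]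

theorem emap_span (s : Set K) : emap ι (span R s) = span R[X] (ι '' s) := by
  refine le_antisymm ?_ (span_mono (Set.image_mono subset_span))
  rw [emap, Submodule.span_le]
  rintro _ ⟨a, ha, rfl⟩
  induction ha using Submodule.span_induction with
  | mem a h => exact subset_span ⟨a, h, rfl⟩
  | zero => simpa using zero_mem _
  | add u v _ _ hu hv => rw [map_add]; exact add_mem hu hv
  | smul r u _ hu => rw [smul_ι ι hι]; exact smul_mem _ _ hu

theorem emap_mul (A B : Submodule R K) : emap ι (A * B) = emap ι A * emap ι B := by
  rw [Submodule.mul_eq_span_mul_set, emap_span ι hι, emap, emap, Submodule.span_mul_span]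
  congr 1
  exact Set.image_mul ι.toMonoidHom

theorem emap_one : emap ι (1 : Submodule R K) = 1 := by
  rw [Submodule.one_eq_span, emap_span ι hι, Set.image_singleton, map_one,
    Submodule.one_eq_span]

theorem emap_pow (A : Submodule R K) (m : ℕ) : emap ι (A ^ m) = emap ι A ^ m := by
  induction m with
  | zero => simpa using emap_one ι hι
  | succ m ih => rw [pow_succ, pow_succ, emap_mul ι hι, ih]

include hι

theorem eval₂_map_eq (q : R[X]) :
    eval₂ ι (algebraMap R[X] L X) (q.map (algebraMap R K)) = algebraMap R[X] L q := by
  rw [eval₂_map]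
  have hcomp : ι.comp (algebraMap R K) = (algebraMap R[X] L).comp (C : R →+* R[X]) :=
    RingHom.ext hι
  rw [hcomp, ← Polynomial.hom_eval₂, eval₂_C_X]

theorem emap_rep_poly (A : Submodule R K) {z : L} (hz : z ∈ emap ι A) :
    ∃ p : K[X], (∀ m, p.coeff m ∈ A) ∧ eval₂ ι (algebraMap R[X] L X) p = z := by
  induction hz using Submodule.span_induction with
  | mem z h =>
    obtain ⟨a, ha, rfl⟩ := h
    exact ⟨C a, fun m => by
      rw [coeff_C]; split
      · exact ha
      · exact zero_mem _, eval₂_C _ _⟩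
  | zero => exact ⟨0, by simp, eval₂_zero _ _⟩
  | add u v _ _ hu hv =>
    obtain ⟨p, hp, hpe⟩ := hu
    obtain ⟨q, hq, hqe⟩ := hv
    exact ⟨p + q, fun m => by rw [coeff_add]; exact add_mem (hp m) (hq m), by
      rw [eval₂_add, hpe, hqe]⟩
  | smul r u _ hu =>
    obtain ⟨p, hp, hpe⟩ := hu
    refine ⟨r.map (algebraMap R K) * p, fun m => ?_, ?_⟩
    · rw [coeff_mul]
      refine sum_mem fun c _ => ?_
      rw [coeff_map, ← Algebra.smul_def]
      exact smul_mem _ _ (hp c.2)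
    · rw [eval₂_mul, hpe, eval₂_map_eq ι hι, Algebra.smul_def]

theorem eval₂_eq_zero (p : K[X]) (hp : eval₂ ι (algebraMap R[X] L X) p = 0) : p = 0 := by
  obtain ⟨d, hd⟩ := IsLocalization.exist_integer_multiples (nonZeroDivisors R) p.support p.coeff
  have hall : ∀ m, IsLocalization.IsInteger R ((d : R) • p.coeff m) := by
    intro m
    by_cases h : m ∈ p.support
    · exact hd m h
    · rw [Polynomial.notMem_support_iff.mp h, smul_zero]; exact ⟨0, map_zero _⟩
  choose r hr using hall
  set Q : R[X] := ∑ m ∈ p.support, monomial m (r m) with hQ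
  have hmap : Q.map (algebraMap R K) = C (algebraMap R K d) * p := by
    ext m
    rw [coeff_map, coeff_C_mul]
    by_cases h : m ∈ p.support
    · have : Q.coeff m = r m := by
        rw [hQ, finset_sum_coeff]
        rw [Finset.sum_eq_single m (fun b _ hb => by rw [coeff_monomial, if_neg hb])
          (fun hm => absurd h hm)]
        rw [coeff_monomial, if_pos rfl]
      rw [this, hr m, Algebra.smul_def]
    · have h0 : p.coeff m = 0 := Polynomial.notMem_support_iff.mp h
      have : Q.coeff m = 0 := by
        rw [hQ, finset_sum_coeff]
        exact Finset.sum_eq_zero fun b hb => by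
          rw [coeff_monomial, if_neg]; rintro rfl; exact h hb
      rw [this, h0, mul_zero, map_zero]
  have hzero : algebraMap R[X] L Q = 0 := by
    rw [← eval₂_map_eq ι hι, hmap, eval₂_mul, hp, mul_zero]
  have hQ0 : Q = 0 := IsFractionRing.injective R[X] L (by rw [hzero, map_zero])
  have : C (algebraMap R K d) * p = 0 := by rw [← hmap, hQ0, Polynomial.map_zero]
  rcases mul_eq_zero.mp this with h | h
  · exfalso
    have hd0 : algebraMap R K (d : R) ≠ 0 :=
      IsFractionRing.to_map_ne_zero_of_mem_nonZeroDivisors d.2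
    exact hd0 (by simpa using congrArg (fun q => Polynomial.coeff q 0) h)
  · exact h

theorem emap_to_ideal 
    {A : Submodule R K} (hA : ∀ z ∈ A, ∃ r, algebraMap R K r = z)
    {z : L} (hz : z ∈ emap ι A) :
    ∃ q ∈ Ideal.map (C : R →+* R[X]) (Submodule.comap (Algebra.linearMap R K) A),
      algebraMap R[X] L q = z := by
  induction hz using Submodule.span_induction with
  | mem z h =>
    obtain ⟨w, hw, rfl⟩ := h
    obtain ⟨r, rfl⟩ := hA w hw
    exact ⟨C r, Ideal.mem_map_of_mem _ hw, (hι r).symm⟩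
  | zero => exact ⟨0, zero_mem _, map_zero _⟩
  | add u v _ _ hu hv =>
    obtain ⟨q₁, hq₁, rfl⟩ := hu
    obtain ⟨q₂, hq₂, rfl⟩ := hv
    exact ⟨q₁ + q₂, add_mem hq₁ hq₂, map_add _ _ _⟩
  | smul p u _ hu =>
    obtain ⟨q, hq, rfl⟩ := hu
    exact ⟨p * q, Ideal.mul_mem_left _ _ hq, by rw [map_mul, Algebra.smul_def]⟩

theorem map_ideal_pow_mem 
    {A : Submodule R K} (a : Ideal R)
    (ha : ∀ r ∈ a, algebraMap R K r ∈ A) {m : ℕ} {q : R[X]}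
    (hq : q ∈ (Ideal.map (C : R →+* R[X]) a) ^ m) :
    algebraMap R[X] L q ∈ emap ι (A ^ m) := by
  rw [← Ideal.map_pow] at hq
  have hq' : q ∈ Submodule.span R[X] ((C : R →+* R[X]) '' (a ^ m : Ideal R)) := hq
  clear hq
  induction hq' using Submodule.span_induction with
  | mem w h =>
    obtain ⟨r, hr, rfl⟩ := h
    rw [← hι]
    exact mem_emap_of_mem (ι := ι) (algebraMap_mem_pow a ha hr)
  | zero => rw [map_zero]; exact zero_mem _
  | add u v _ _ hu hv => rw [map_add]; exact add_mem hu hv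
  | smul p u _ hu =>
    rw [smul_eq_mul, map_mul, ← Algebra.smul_def]
    exact smul_mem _ _ hu


omit hι

theorem mem_bStar_iff {S M : Type*} [CommRing S] [Field M] [Algebra S M]
    {E : Submodule S M} {x : M} :
    x ∈ bStarSet E ↔ ∃ J : Submodule S M,
      (J ≠ ⊥ ∧ J.FG ∧ IsFractional (nonZeroDivisors S) J) ∧ x ∈ (E * J) / J := by
  simp only [bStarSet, Set.mem_iUnion, SetLike.mem_coe, Set.mem_setOf_eq, exists_prop]

theorem zero_mem_bStar {S M : Type*} [CommRing S] [Nontrivial S] [Field M] [Algebra S M]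
    (E : Submodule S M) : (0 : M) ∈ bStarSet E := by
  rw [mem_bStar_iff]
  refine ⟨1, ⟨?_, ?_, ?_⟩, zero_mem _⟩
  · rw [Submodule.ne_bot_iff]
    exact ⟨1, by rw [Submodule.one_eq_span]; exact mem_span_singleton_self 1, one_ne_zero⟩
  · rw [Submodule.one_eq_span]; exact fg_span_singleton 1
  · exact ⟨1, one_mem _, fun b hb => by
      rw [Submodule.one_eq_span, Submodule.mem_span_singleton] at hb
      obtain ⟨r, rfl⟩ := hb
      exact ⟨r, by rw [one_smul]; exact Algebra.algebraMap_eq_smul_one (A := M) r⟩⟩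

include hι

theorem easy_dir (I : Submodule R K) {x : K} (hx : x ∈ bStarSet I) :
    ι x ∈ bStarSet (emap ι I) := by
  rw [mem_bStar_iff] at hx ⊢
  obtain ⟨J, ⟨hJ0, hJfg, hJfrac⟩, hxJ⟩ := hx
  refine ⟨emap ι J, ⟨?_, ?_, ?_⟩, ?_⟩
  · obtain ⟨z, hz, hz0⟩ := (Submodule.ne_bot_iff J).mp hJ0
    exact (Submodule.ne_bot_iff _).mpr ⟨ι z, mem_emap_of_mem ι hz, fun h => hz0 (by
      have := ι.injective (h.trans ι.map_zero.symm); exact this)⟩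
  · obtain ⟨s, hs⟩ := hJfg
    have : emap ι J = span R[X] (ι '' (s : Set K)) := by rw [← hs, emap_span ι hι]
    rw [this]
    exact fg_span ((s : Set K).toFinite.image ι)
  · obtain ⟨d, hd, hdint⟩ := hJfrac
    refine ⟨C d, ?_, ?_⟩
    · rw [mem_nonZeroDivisors_iff_ne_zero]
      exact C_ne_zero.mpr (nonZeroDivisors.ne_zero hd)
    · intro b hb
      induction hb using Submodule.span_induction with
      | mem z h =>
        obtain ⟨w, hw, rfl⟩ := h
        obtain ⟨r, hr⟩ := hdint w hw
        refine ⟨C r, ?_⟩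
        have h2 : (C d • ι w : L) = ι (d • w) := by
          rw [Algebra.smul_def (A := L), ← hι, ← map_mul, ← Algebra.smul_def]
        rw [← hι r, h2, hr]
      | zero => exact ⟨0, by rw [map_zero, smul_zero]⟩
      | add u v _ _ hu hv =>
        rw [smul_add]; exact IsLocalization.isInteger_add hu hv
      | smul p u _ hu =>
        rw [smul_comm]; exact IsLocalization.isInteger_smul hu
  · rw [Submodule.mem_div_iff_forall_mul_mem] at hxJ ⊢
    intro b hb
    rw [← emap_mul ι hι]
    induction hb using Submodule.span_induction with
    | mem z h =>
      obtain ⟨w, hw, rfl⟩ := h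
      rw [← map_mul]
      exact mem_emap_of_mem ι (hxJ w hw)
    | zero => rw [mul_zero]; exact zero_mem _
    | add u v _ _ hu hv => rw [mul_add]; exact add_mem hu hv
    | smul p u _ hu => rw [mul_smul_comm]; exact smul_mem _ _ hu

theorem hard_dir (I : Submodule R K) (hfrac : IsFractional (nonZeroDivisors R) I)
    {x : K} (hx : ι x ∈ bStarSet (emap ι I)) : x ∈ bStarSet I := by
  classical
  by_cases hx0 : x = 0
  · subst hx0; exact zero_mem_bStar I
  rw [mem_bStar_iff] at hx
  obtain ⟨J', ⟨hJ'0, hJ'fg, -⟩, hdiv⟩ := hx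
  rw [Submodule.mem_div_iff_forall_mul_mem] at hdiv
  obtain ⟨n, g, hg⟩ := Submodule.fg_iff_exists_fin_generating_family.mp hJ'fg
  rcases Nat.eq_zero_or_pos n with hn | hn
  · exfalso
    apply hJ'0
    rw [← hg]
    subst hn
    rw [Set.range_eq_empty g, Submodule.span_empty]
  have hgne : g ≠ 0 := by
    rintro rfl
    apply hJ'0
    rw [← hg]
    refine le_bot_iff.mp (Submodule.span_le.mpr ?_)
    rintro _ ⟨i, rfl⟩
    simp
  have hrep : ∀ i, ∃ e : Fin n → L, (∀ j, e j ∈ emap ι I) ∧ ι x * g i = ∑ j, e j * g j := by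
    intro i
    refine rep_mul_span ?_
    rw [hg]
    exact hdiv (g i) (by rw [← hg]; exact Submodule.subset_span ⟨i, rfl⟩)
  choose e he hrepr using hrep
  obtain ⟨d, hd, hdint⟩ := hfrac
  set d' : K := algebraMap R K d with hd'def
  have hd'0 : d' ≠ 0 := IsFractionRing.to_map_ne_zero_of_mem_nonZeroDivisors hd
  set A : Submodule R K := Submodule.span R {d'} * I with hAdef
  have hA_int : ∀ z ∈ A, ∃ r, algebraMap R K r = z := by
    intro z hz
    rw [hAdef, Submodule.mem_span_singleton_mul] at hz
    obtain ⟨w, hw, rfl⟩ := hz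
    obtain ⟨r, hr⟩ := hdint w hw
    exact ⟨r, by rw [hr, Algebra.smul_def]⟩
  have hent : ∀ i j, ι d' * e i j ∈ emap ι A := by
    intro i j
    have h1 : emap ι A = Submodule.span R[X] {ι d'} * emap ι I := by
      rw [hAdef, emap_mul ι hι]
      congr 1
      rw [emap_span ι hι, Set.image_singleton]
    rw [h1]
    exact Submodule.mul_mem_mul (Submodule.mem_span_singleton_self _) (he i j)
  set a : Ideal R := Submodule.comap (Algebra.linearMap R K) A with hadef
  have hmem : ∀ i j, ∃ q ∈ Ideal.map (C : R →+* R[X]) a, algebraMap R[X] L q = ι d' * e i j :=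
    fun i j => emap_to_ideal ι hι hA_int (hent i j)
  choose M hMa hMval using hmem
  set x' : K := d' * x with hx'def
  set y' : L := ι x' with hy'def
  have hy' : y' = ι d' * ι x := by rw [hy'def, hx'def, map_mul]
  set N : Matrix (Fin n) (Fin n) L := Matrix.of (fun i j => ι d' * e i j) with hNdef
  have hvec : (y' • (1 : Matrix (Fin n) (Fin n) L) - N).mulVec g = 0 := by
    have h1 : N.mulVec g = y' • g := by
      funext i
      simp only [Matrix.mulVec, dotProduct, hNdef, Matrix.of_apply, Pi.smul_apply,
        smul_eq_mul]
      rw [hy', mul_assoc, hrepr i, Finset.mul_sum]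
      exact Finset.sum_congr rfl fun j _ => by ring
    rw [Matrix.sub_mulVec, Matrix.smul_mulVec, Matrix.one_mulVec, h1, sub_self]
  have hdet : (y' • (1 : Matrix (Fin n) (Fin n) L) - N).det = 0 :=
    Matrix.exists_mulVec_eq_zero_iff.mp ⟨g, hgne, hvec⟩
  set MM : Matrix (Fin n) (Fin n) R[X] := Matrix.of M with hMMdef
  have hcoeff : ∀ k, MM.charpoly.coeff k ∈ (Ideal.map (C : R →+* R[X]) a) ^ (n - k) := by
    intro k
    have h1 := Matrix.coeff_charpoly_mem_ideal_pow (M := MM)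
      (I := Ideal.map (C : R →+* R[X]) a) (fun i j => hMa i j) k
    rwa [Fintype.card_fin] at h1
  set P : L[X] := MM.charpoly.map (algebraMap R[X] L) with hPdef
  have hPeval : P.eval y' = 0 := by
    rw [hPdef, eval_map]
    have hψ : eval₂ (algebraMap R[X] L) y' MM.charpoly
        = (eval₂RingHom (algebraMap R[X] L) y') MM.charpoly := rfl
    rw [hψ, Matrix.charpoly, RingHom.map_det, ← hdet]
    congr 1
    ext i j
    rw [RingHom.mapMatrix_apply, Matrix.map_apply]
    by_cases hij : i = j
    · subst hij
      rw [Matrix.charmatrix_apply_eq, coe_eval₂RingHom, eval₂_sub, eval₂_X, eval₂_C]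
      simp only [hMMdef, hNdef, Matrix.of_apply, Matrix.sub_apply, Matrix.smul_apply,
        Matrix.one_apply_eq, smul_eq_mul, mul_one, hMval i i]
    · rw [Matrix.charmatrix_apply_ne _ _ _ hij, coe_eval₂RingHom, eval₂_neg, eval₂_C]
      simp only [hMMdef, hNdef, Matrix.of_apply, Matrix.sub_apply, Matrix.smul_apply,
        Matrix.one_apply_ne hij, smul_zero, zero_sub, hMval i j]
  have hPmonic : P.Monic := (MM.charpoly_monic).map _
  have hPdeg : P.natDegree = n := by
    rw [hPdef, (MM.charpoly_monic).natDegree_map, Matrix.charpoly_natDegree_eq_dim,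
      Fintype.card_fin]
  have hkey : y' ^ n + ∑ k ∈ Finset.range n, P.coeff k * y' ^ k = 0 := by
    have h1 := Polynomial.eval_eq_sum_range (p := P) y'
    rw [hPeval, hPdeg, Finset.sum_range_succ] at h1
    have hc : P.coeff n = 1 := by
      have h2 := hPmonic.coeff_natDegree
      rwa [hPdeg] at h2
    rw [hc, one_mul] at h1
    rw [add_comm]
    exact h1.symm
  have hrepc : ∀ k, ∃ p : K[X], (∀ m, p.coeff m ∈ A ^ (n - k)) ∧
      eval₂ ι (algebraMap R[X] L X) p = P.coeff k := by
    intro k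
    apply emap_rep_poly ι hι
    have h1 : P.coeff k = algebraMap R[X] L (MM.charpoly.coeff k) := by rw [hPdef, coeff_map]
    rw [h1]
    exact map_ideal_pow_mem ι hι a (fun r hr => hr) (hcoeff k)
  choose p hpc hpe using hrepc
  have hQ0 : (C x' ^ n + ∑ k ∈ Finset.range n, p k * C x' ^ k : K[X]) = 0 := by
    apply eval₂_eq_zero ι hι
    have hψ : ∀ q : K[X], eval₂ ι (algebraMap R[X] L X) q
        = (eval₂RingHom ι (algebraMap R[X] L X)) q := fun _ => rfl
    rw [hψ, map_add, map_pow, map_sum]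
    simp only [map_mul, map_pow, coe_eval₂RingHom, eval₂_C]
    have h2 : ∀ k ∈ Finset.range n,
        eval₂ ι (algebraMap R[X] L X) (p k) * ι x' ^ k = P.coeff k * y' ^ k := fun k _ => by
      rw [hpe k, hy'def]
    rw [Finset.sum_congr rfl h2, ← hy'def]
    exact hkey
  have hnum : x' ^ n + ∑ k ∈ Finset.range n, (p k).coeff 0 * x' ^ k = 0 := by
    have h0 := congrArg (fun q : K[X] => q.coeff 0) hQ0
    simp only [coeff_add, finset_sum_coeff, coeff_zero] at h0
    simp_rw [← map_pow, coeff_mul_C, coeff_C_zero] at h0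
    exact h0
  have hb' : ∀ k, (p k).coeff 0 ∈ Submodule.span R {d' ^ (n - k)} * I ^ (n - k) := by
    intro k
    have h1 : A ^ (n - k) = Submodule.span R {d' ^ (n - k)} * I ^ (n - k) := by
      rw [hAdef, mul_pow, Submodule.span_pow, Set.singleton_pow]
    rw [← h1]
    exact hpc k 0
  have hbex : ∀ k, ∃ bk ∈ I ^ (n - k), d' ^ (n - k) * bk = (p k).coeff 0 := fun k =>
    Submodule.mem_span_singleton_mul.mp (hb' k)
  choose b hbI hbval using hbex
  have hstar : x ^ n + ∑ k ∈ Finset.range n, b k * x ^ k = 0 := by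
    have hfac : d' ^ n * (x ^ n + ∑ k ∈ Finset.range n, b k * x ^ k) = 0 := by
      rw [mul_add, Finset.mul_sum]
      have hterm : ∀ k ∈ Finset.range n,
          d' ^ n * (b k * x ^ k) = (p k).coeff 0 * x' ^ k := by
        intro k hk
        have hkn : k ≤ n := le_of_lt (Finset.mem_range.mp hk)
        rw [← hbval k, hx'def, mul_pow,
          show d' ^ n = d' ^ (n - k) * d' ^ k from by rw [← pow_add, Nat.sub_add_cancel hkn]]
        ring
      rw [Finset.sum_congr rfl hterm, hx'def, ← mul_pow]
      rw [← hx'def]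
      exact hnum
    rcases mul_eq_zero.mp hfac with h | h
    · exact absurd h (pow_ne_zero n hd'0)
    · exact h
  choose Qf hQfg hQle hQmem using fun k => exists_fg_pow (hbI k)
  set I₁ : Submodule R K := ⨆ k ∈ Finset.range n, Qf k with hI₁def
  have hI₁fg : I₁.FG := fg_biSup _ _ (fun k _ => hQfg k)
  have hI₁le : I₁ ≤ I := iSup₂_le fun k _ => hQle k
  have hbI₁ : ∀ k < n, b k ∈ I₁ ^ (n - k) := fun k hk =>
    pow_mono (le_iSup₂ (f := fun k _ => Qf k) k (Finset.mem_range.mpr hk)) _ (hQmem k)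
  set T : ℕ → Submodule R K := fun k => Submodule.span R {x ^ k} * I₁ ^ (n - 1 - k) with hTdef
  set J : Submodule R K := ⨆ k ∈ Finset.range n, T k with hJdef
  have hJfg : J.FG := fg_biSup _ _ fun k _ => (fg_span_singleton _).mul (hI₁fg.pow _)
  have hI₁frac : IsFractional (nonZeroDivisors R) I₁ :=
    ⟨d, hd, fun bb hbb => hdint bb (hI₁le hbb)⟩
  have hJfrac : IsFractional (nonZeroDivisors R) J :=
    isFractional_biSup _ _ fun k _ =>
      (FractionalIdeal.isFractional_span_singleton _).mul (isFractional_pow hI₁frac _)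
  have hTle : ∀ k ∈ Finset.range n, T k ≤ J := fun k hk =>
    le_iSup₂ (f := fun k _ => T k) k hk
  have hxn1 : x ^ (n - 1) ∈ J := by
    refine hTle (n - 1) (Finset.mem_range.mpr (by omega)) ?_
    rw [hTdef]
    dsimp only
    rw [Nat.sub_self, pow_zero, mul_one]
    exact Submodule.mem_span_singleton_self _
  have hJ0 : J ≠ ⊥ := (Submodule.ne_bot_iff J).mpr ⟨x ^ (n - 1), hxn1, pow_ne_zero _ hx0⟩
  have hxn : x ^ n ∈ I₁ * J := by
    have hxneq : x ^ n = -∑ k ∈ Finset.range n, b k * x ^ k :=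
      eq_neg_of_add_eq_zero_left hstar
    rw [hxneq]
    refine neg_mem (Submodule.sum_mem _ fun k hk => ?_)
    have hkn := Finset.mem_range.mp hk
    have h1 : b k * x ^ k ∈ I₁ ^ (n - k) * Submodule.span R {x ^ k} :=
      Submodule.mul_mem_mul (hbI₁ k hkn) (Submodule.mem_span_singleton_self _)
    have h2 : I₁ ^ (n - k) * Submodule.span R {x ^ k} ≤ I₁ * J := by
      rw [show n - k = (n - 1 - k) + 1 from by omega, pow_succ' I₁ (n - 1 - k)]
      have h3 : I₁ * I₁ ^ (n - 1 - k) * Submodule.span R {x ^ k}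
          = I₁ * T k := by rw [hTdef]; dsimp only; ring
      rw [h3]
      exact mul_le_mul' le_rfl (hTle k hk)
    exact h2 h1
  have hmul : ∀ z ∈ J, x * z ∈ I₁ * J := by
    have hle : J ≤ Submodule.comap (LinearMap.mulLeft R x) (I₁ * J) := by
      refine iSup₂_le fun k hk => ?_
      have hkn := Finset.mem_range.mp hk
      intro w hw
      rw [hTdef] at hw
      dsimp only at hw
      rw [Submodule.mem_span_singleton_mul] at hw
      obtain ⟨u, hu, rfl⟩ := hw
      simp only [Submodule.mem_comap, LinearMap.mulLeft_apply]
      by_cases hk1 : k = n - 1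
      · subst hk1
        rw [Nat.sub_self, pow_zero, Submodule.mem_one] at hu
        obtain ⟨r, hr⟩ := hu
        have hxx : x * (x ^ (n - 1) * u) = r • x ^ n := by
          rw [← hr, Algebra.smul_def,
            show x ^ n = x ^ (n - 1 + 1) from by rw [Nat.sub_add_cancel hn], pow_succ]
          ring
        rw [hxx]
        exact Submodule.smul_mem _ _ hxn
      · have hk2 : k + 1 < n := by omega
        have h1 : x * (x ^ k * u) = x ^ (k + 1) * u := by rw [pow_succ]; ring
        rw [h1]
        have h2 : x ^ (k + 1) * u ∈ Submodule.span R {x ^ (k + 1)} * I₁ ^ (n - 1 - k) :=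
          Submodule.mem_span_singleton_mul.mpr ⟨u, hu, rfl⟩
        have h3 : Submodule.span R {x ^ (k + 1)} * I₁ ^ (n - 1 - k) ≤ I₁ * J := by
          rw [show n - 1 - k = (n - 1 - (k + 1)) + 1 from by omega, pow_succ I₁ (n - 1 - (k + 1))]
          have h4 : Submodule.span R {x ^ (k + 1)} * (I₁ ^ (n - 1 - (k + 1)) * I₁)
              = I₁ * T (k + 1) := by rw [hTdef]; dsimp only; ring
          rw [h4]
          exact mul_le_mul' le_rfl (hTle (k + 1) (Finset.mem_range.mpr hk2))
        exact h3 h2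
    intro z hz
    exact hle hz
  rw [mem_bStar_iff]
  refine ⟨J, ⟨hJ0, hJfg, hJfrac⟩, ?_⟩
  rw [Submodule.mem_div_iff_forall_mul_mem]
  intro z hz
  exact mul_le_mul' hI₁le le_rfl (hmul z hz)

end Stmt12

/-- for `R` integrally closed, the star operation on `R` induced by `*_X`
is `*_R`: for every nonzero fractional ideal `I` of `R`, `(I[X])^{*_X} ∩ K = I^{*_R}`,
where `ι : K →+* L = K(X)` is the canonical embedding. -/
theorem statement12 [IsIntegrallyClosed R]
    (ι : K →+* L) (hι : ∀ r : R, ι (algebraMap R K r) = algebraMap R[X] L (C r))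
    (I : Submodule R K) (hI : I ≠ ⊥) (hfrac : IsFractional (nonZeroDivisors R) I) :
    ι ⁻¹' bStarSet (Submodule.span R[X] (ι '' (I : Set K))) = bStarSet I := by
  ext x
  simp only [Set.mem_preimage]
  exact ⟨fun h => Stmt12.hard_dir ι hι I hfrac h, fun h => Stmt12.easy_dir ι hι I h⟩
end
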